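/- arXiv:2405.03455 — 3 statements merged into one kernel-verified Lean document; each statement's English description precedes it below -/
import Mathlib

section
/- For all integers m, n, ℓ ≥ 3, there exists a finite set P ⊆ ℝ² whose points have pairwise distinct x-coordinates, containing no ℓ collinear points, no m-cup, and no n-cap, such that 2·|P| ≥ (ℓ − 1)·binom(m+n−4, n−2) − (ℓ − 3)·binom(m+n−6, n−3). Consequently f_ℓ(m,n) > (ℓ−1)/2 · binom(m+n−4, n−2) − (ℓ−3)/2 · binom(m+n−6, n−3). -/
open Finset

noncomputable section

abbrev Pt : Type := ℝ × ℝ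

/-- `P` contains `l` collinear points. -/
def HasCollinear (l : ℕ) (P : Finset Pt) : Prop :=
  ∃ S : Finset Pt, S ⊆ P ∧ S.card = l ∧ Collinear ℝ (S : Set Pt)

/-- `X` is in convex position: no point of `X` lies in the convex hull of the others. -/
def ConvexPos (X : Finset Pt) : Prop :=
  ∀ x ∈ X, x ∉ convexHull ℝ ((X.erase x : Finset Pt) : Set Pt)

/-- `p 0, …, p (k-1)` have strictly increasing x-coordinates and each `p (i+1)` lies
strictly below the line through `p i` and `p (i+2)` (a `k`-cup). -/
def IsCupSeq {k : ℕ} (p : Fin k → Pt) : Prop :=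
  (∀ i j : Fin k, i < j → (p i).1 < (p j).1) ∧
  ∀ i : ℕ, ∀ h : i + 2 < k,
    ((p ⟨i + 1, by omega⟩).2 - (p ⟨i, by omega⟩).2) * ((p ⟨i + 2, h⟩).1 - (p ⟨i, by omega⟩).1)
      < ((p ⟨i + 2, h⟩).2 - (p ⟨i, by omega⟩).2) * ((p ⟨i + 1, by omega⟩).1 - (p ⟨i, by omega⟩).1)

/-- `p 0, …, p (k-1)` have strictly increasing x-coordinates and each `p (i+1)` lies
strictly above the line through `p i` and `p (i+2)` (a `k`-cap). -/
def IsCapSeq {k : ℕ} (p : Fin k → Pt) : Prop :=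
  (∀ i j : Fin k, i < j → (p i).1 < (p j).1) ∧
  ∀ i : ℕ, ∀ h : i + 2 < k,
    ((p ⟨i + 1, by omega⟩).2 - (p ⟨i, by omega⟩).2) * ((p ⟨i + 2, h⟩).1 - (p ⟨i, by omega⟩).1)
      > ((p ⟨i + 2, h⟩).2 - (p ⟨i, by omega⟩).2) * ((p ⟨i + 1, by omega⟩).1 - (p ⟨i, by omega⟩).1)

/-- `P` contains a `k`-cup. -/
def HasCup (k : ℕ) (P : Finset Pt) : Prop :=
  ∃ p : Fin k → Pt, (∀ i, p i ∈ P) ∧ IsCupSeq p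

/-- `P` contains a `k`-cap. -/
def HasCap (k : ℕ) (P : Finset Pt) : Prop :=
  ∃ p : Fin k → Pt, (∀ i, p i ∈ P) ∧ IsCapSeq p

/-- The points of `P` have pairwise distinct x-coordinates. -/
def DistinctX (P : Finset Pt) : Prop :=
  Set.InjOn Prod.fst (P : Set Pt)

/-- There is an affine line (given by the equation `a*x + b*y = c`) strictly
separating `A` from `B`. -/
def SepLine (A B : Set Pt) : Prop :=
  ∃ a b c : ℝ, (a, b) ≠ ((0 : ℝ), (0 : ℝ)) ∧ (∀ x ∈ A, a * x.1 + b * x.2 < c) ∧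
    (∀ y ∈ B, c < a * y.1 + b * y.2)

/-- `P` avoids `K`: the line through any two distinct points of `P` is disjoint from `K`. -/
def Avoids (P : Finset Pt) (K : Set Pt) : Prop :=
  ∀ p ∈ P, ∀ q ∈ P, p ≠ q → ∀ x ∈ K, x ∉ affineSpan ℝ ({p, q} : Set Pt)

/-- `X` is an inner-cap with respect to `K`. -/
def InnerCap (K : Set Pt) (X : Finset Pt) : Prop :=
  ∀ x ∈ X, SepLine {x} (convexHull ℝ (((X.erase x : Finset Pt) : Set Pt) ∪ K))

/-- `X` is an outer-cup with respect to `K`. -/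
def OuterCup (K : Set Pt) (X : Finset Pt) : Prop :=
  ∀ x ∈ X, SepLine (convexHull ℝ ({x} ∪ K)) ((X.erase x : Finset Pt) : Set Pt)

/-- The line `L` crosses the cell `Δ`: it meets `Δ` but does not contain it. -/
def Crosses (L Δ : Set Pt) : Prop := (L ∩ Δ).Nonempty ∧ ¬ Δ ⊆ L

namespace ES

lemma isCupSeq_slice {k : ℕ} {p : Fin k → Pt} (h : IsCupSeq p) (d a : ℕ) (hda : d + a ≤ k) :
    IsCupSeq (fun i : Fin a => p ⟨d + i.1, by omega⟩) := by
  constructor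
  · intro i j hij
    exact h.1 ⟨d + i.1, by omega⟩ ⟨d + j.1, by omega⟩ (by simp only [Fin.mk_lt_mk]; omega)
  · intro i hi
    exact h.2 (d + i) (by omega)

lemma isCapSeq_slice {k : ℕ} {p : Fin k → Pt} (h : IsCapSeq p) (d a : ℕ) (hda : d + a ≤ k) :
    IsCapSeq (fun i : Fin a => p ⟨d + i.1, by omega⟩) := by
  constructor
  · intro i j hij
    exact h.1 ⟨d + i.1, by omega⟩ ⟨d + j.1, by omega⟩ (by simp only [Fin.mk_lt_mk]; omega)
  · intro i hi
    exact h.2 (d + i) (by omega)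

lemma hasCup_mono {P : Finset Pt} {j k : ℕ} (hjk : j ≤ k) (h : HasCup k P) : HasCup j P := by
  obtain ⟨p, hm, hs⟩ := h
  exact ⟨_, fun i => hm _, isCupSeq_slice hs 0 j (by omega)⟩

lemma hasCap_mono {P : Finset Pt} {j k : ℕ} (hjk : j ≤ k) (h : HasCap k P) : HasCap j P := by
  obtain ⟨p, hm, hs⟩ := h
  exact ⟨_, fun i => hm _, isCapSeq_slice hs 0 j (by omega)⟩

lemma collinear_cross_eq_zero {S : Set Pt} (h : Collinear ℝ S) {p q r : Pt}
    (hp : p ∈ S) (hq : q ∈ S) (hr : r ∈ S) :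
    (q.2 - p.2) * (r.1 - p.1) - (r.2 - p.2) * (q.1 - p.1) = 0 := by
  obtain ⟨p₀, v, hv⟩ := (collinear_iff_exists_forall_eq_smul_vadd S).mp h
  obtain ⟨tp, hp'⟩ := hv p hp
  obtain ⟨tq, hq'⟩ := hv q hq
  obtain ⟨tr, hr'⟩ := hv r hr
  subst hp' hq' hr'
  simp only [vadd_eq_add, Prod.fst_add, Prod.snd_add, Prod.smul_fst, Prod.smul_snd, smul_eq_mul]
  ring

def aff (a b c d : ℝ) : Pt → Pt := fun p => (a * p.1 + c, b * p.2 + d)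

lemma aff_injective {a b c d : ℝ} (ha : a ≠ 0) (hb : b ≠ 0) :
    Function.Injective (aff a b c d) := by
  rintro ⟨x, y⟩ ⟨x', y'⟩ h
  simp only [aff, Prod.mk.injEq] at h ⊢
  exact ⟨mul_left_cancel₀ ha (by linarith [h.1]), mul_left_cancel₀ hb (by linarith [h.2])⟩

lemma aff_inv {a b c d : ℝ} (ha : a ≠ 0) (hb : b ≠ 0) (p : Pt) :
    aff (1/a) (1/b) (-(c/a)) (-(d/b)) (aff a b c d p) = p := by
  obtain ⟨x, y⟩ := p
  simp only [aff, Prod.mk.injEq]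
  constructor <;> field_simp <;> ring

lemma isCupSeq_aff {a b c d : ℝ} (ha : 0 < a) (hb : 0 < b) {k : ℕ} {p : Fin k → Pt}
    (h : IsCupSeq p) : IsCupSeq (fun i => aff a b c d (p i)) := by
  constructor
  · intro i j hij
    have := h.1 i j hij
    simp only [aff]
    nlinarith
  · intro i hi
    have key := h.2 i hi
    simp only [aff]
    nlinarith [mul_pos ha hb]

lemma isCapSeq_aff {a b c d : ℝ} (ha : 0 < a) (hb : 0 < b) {k : ℕ} {p : Fin k → Pt}
    (h : IsCapSeq p) : IsCapSeq (fun i => aff a b c d (p i)) := by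
  constructor
  · intro i j hij
    have := h.1 i j hij
    simp only [aff]
    nlinarith
  · intro i hi
    have key := h.2 i hi
    simp only [aff]
    nlinarith [mul_pos ha hb]

def mir : Pt → Pt := aff 1 (-1) 0 0

lemma isCupSeq_mir_of_cap {k : ℕ} {p : Fin k → Pt} (h : IsCapSeq p) :
    IsCupSeq (fun i => mir (p i)) := by
  constructor
  · intro i j hij
    have := h.1 i j hij
    simp only [mir, aff]
    linarith
  · intro i hi
    have key := h.2 i hi
    simp only [mir, aff]
    nlinarith

lemma isCapSeq_mir_of_cup {k : ℕ} {p : Fin k → Pt} (h : IsCupSeq p) :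
    IsCapSeq (fun i => mir (p i)) := by
  constructor
  · intro i j hij
    have := h.1 i j hij
    simp only [mir, aff]
    linarith
  · intro i hi
    have key := h.2 i hi
    simp only [mir, aff]
    nlinarith

lemma collinear_aff_image {a b c d : ℝ} {S : Set Pt} (h : Collinear ℝ S) :
    Collinear ℝ ((aff a b c d) '' S) := by
  rw [collinear_iff_exists_forall_eq_smul_vadd] at h ⊢
  obtain ⟨p₀, v, hv⟩ := h
  refine ⟨aff a b c d p₀, (a * v.1, b * v.2), ?_⟩
  rintro _ ⟨x, hx, rfl⟩
  obtain ⟨t, rfl⟩ := hv x hx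
  refine ⟨t, ?_⟩
  simp only [aff, vadd_eq_add, Prod.mk.injEq, Prod.fst_add, Prod.snd_add, Prod.smul_fst,
    Prod.smul_snd, smul_eq_mul, Prod.smul_mk, Prod.mk_add_mk]
  constructor <;> ring

end ES

namespace ES

lemma hasCup_of_image_aff {a b c d : ℝ} (ha : 0 < a) (hb : 0 < b) {k : ℕ} {P : Finset Pt}
    (h : HasCup k (P.image (aff a b c d))) : HasCup k P := by
  obtain ⟨p, hm, hs⟩ := h
  refine ⟨fun i => aff (1/a) (1/b) (-(c/a)) (-(d/b)) (p i), fun i => ?_,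
    isCupSeq_aff (by positivity) (by positivity) hs⟩
  obtain ⟨x, hx, hxe⟩ := Finset.mem_image.mp (hm i)
  show aff (1/a) (1/b) (-(c/a)) (-(d/b)) (p i) ∈ P
  rw [← hxe, aff_inv ha.ne' hb.ne']
  exact hx

lemma hasCap_of_image_aff {a b c d : ℝ} (ha : 0 < a) (hb : 0 < b) {k : ℕ} {P : Finset Pt}
    (h : HasCap k (P.image (aff a b c d))) : HasCap k P := by
  obtain ⟨p, hm, hs⟩ := h
  refine ⟨fun i => aff (1/a) (1/b) (-(c/a)) (-(d/b)) (p i), fun i => ?_,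
    isCapSeq_aff (by positivity) (by positivity) hs⟩
  obtain ⟨x, hx, hxe⟩ := Finset.mem_image.mp (hm i)
  show aff (1/a) (1/b) (-(c/a)) (-(d/b)) (p i) ∈ P
  rw [← hxe, aff_inv ha.ne' hb.ne']
  exact hx

lemma mir_mir (p : Pt) : mir (mir p) = p := by
  obtain ⟨x, y⟩ := p
  simp [mir, aff]

lemma hasCap_of_image_mir {k : ℕ} {P : Finset Pt}
    (h : HasCup k (P.image mir)) : HasCap k P := by
  obtain ⟨p, hm, hs⟩ := h
  refine ⟨fun i => mir (p i), fun i => ?_, isCapSeq_mir_of_cup hs⟩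
  obtain ⟨x, hx, hxe⟩ := Finset.mem_image.mp (hm i)
  show mir (p i) ∈ P
  rw [← hxe, mir_mir]
  exact hx

lemma hasCup_of_image_mir {k : ℕ} {P : Finset Pt}
    (h : HasCap k (P.image mir)) : HasCup k P := by
  obtain ⟨p, hm, hs⟩ := h
  refine ⟨fun i => mir (p i), fun i => ?_, isCupSeq_mir_of_cap hs⟩
  obtain ⟨x, hx, hxe⟩ := Finset.mem_image.mp (hm i)
  show mir (p i) ∈ P
  rw [← hxe, mir_mir]
  exact hx

lemma hasCollinear_of_image_aff {a b c d : ℝ} (ha : a ≠ 0) (hb : b ≠ 0) {l : ℕ} {P : Finset Pt}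
    (h : HasCollinear l (P.image (aff a b c d))) : HasCollinear l P := by
  obtain ⟨S, hS, hcard, hcol⟩ := h
  have hainv : (1:ℝ)/a ≠ 0 := one_div_ne_zero ha
  have hbinv : (1:ℝ)/b ≠ 0 := one_div_ne_zero hb
  refine ⟨S.image (aff (1/a) (1/b) (-(c/a)) (-(d/b))), ?_, ?_, ?_⟩
  · intro s' hs'
    obtain ⟨s, hsS, rfl⟩ := Finset.mem_image.mp hs'
    obtain ⟨x, hxP, rfl⟩ := Finset.mem_image.mp (hS hsS)
    rw [aff_inv ha hb]
    exact hxP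
  · rw [Finset.card_image_of_injective _ (aff_injective hainv hbinv)]
    exact hcard
  · rw [Finset.coe_image]
    exact collinear_aff_image hcol

lemma hasCollinear_of_image_mir {l : ℕ} {P : Finset Pt}
    (h : HasCollinear l (P.image mir)) : HasCollinear l P := by
  exact hasCollinear_of_image_aff one_ne_zero (by norm_num) h

lemma distinctX_image_aff {a b c d : ℝ} (ha : a ≠ 0) {P : Finset Pt} (hP : DistinctX P) :
    DistinctX (P.image (aff a b c d)) := by
  intro u hu v hv he
  simp only [Finset.coe_image, Set.mem_image, Finset.mem_coe] at hu hv
  obtain ⟨x, hx, rfl⟩ := hu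
  obtain ⟨y, hy, rfl⟩ := hv
  simp only [aff] at he
  have : x.1 = y.1 := mul_left_cancel₀ ha (by linarith [he])
  rw [hP hx hy this]

lemma distinctX_image_mir {P : Finset Pt} (hP : DistinctX P) :
    DistinctX (P.image mir) := distinctX_image_aff one_ne_zero hP

lemma card_image_aff {a b c d : ℝ} (ha : a ≠ 0) (hb : b ≠ 0) (P : Finset Pt) :
    (P.image (aff a b c d)).card = P.card :=
  Finset.card_image_of_injective _ (aff_injective ha hb)

lemma exists_slope_bound (P : Finset Pt) (hP : DistinctX P) :
    ∃ M : ℝ, 0 < M ∧ ∀ p ∈ P, ∀ q ∈ P, p ≠ q → |q.2 - p.2| ≤ M * |q.1 - p.1| := by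
  classical
  set G : Pt × Pt → ℝ := fun pq => |pq.2.2 - pq.1.2| / |pq.2.1 - pq.1.1| with hG
  refine ⟨1 + ∑ pq ∈ P ×ˢ P, G pq, by positivity, ?_⟩
  intro p hp q hq hpq
  have hx : q.1 - p.1 ≠ 0 := by
    intro h0
    exact hpq (hP (Finset.mem_coe.mpr hp) (Finset.mem_coe.mpr hq) (by linarith))
  have habs : |q.1 - p.1| ≠ 0 := abs_ne_zero.mpr hx
  have h0 : (0:ℝ) ≤ |q.1 - p.1| := abs_nonneg _
  have hmem : (p, q) ∈ P ×ˢ P := Finset.mem_product.mpr ⟨hp, hq⟩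
  have hle : G (p, q) ≤ ∑ pq ∈ P ×ˢ P, G pq :=
    Finset.single_le_sum (fun pq _ => by positivity) hmem
  have heq : |q.2 - p.2| = G (p, q) * |q.1 - p.1| := by
    rw [hG]
    exact (div_mul_cancel₀ _ habs).symm
  rw [heq]
  exact mul_le_mul_of_nonneg_right (by linarith) h0

end ES

namespace ES

set_option maxHeartbeats 1000000 in
lemma normalize (P : Finset Pt) (hne : P.Nonempty) (hP : DistinctX P) (x0 x1 y0 y1 s : ℝ)
    (hx : x0 < x1) (hy : y0 < y1) (hs : 0 < s) :
    ∃ Q : Finset Pt, Q.Nonempty ∧ Q.card = P.card ∧ DistinctX Q ∧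
      (∀ q ∈ Q, x0 < q.1 ∧ q.1 < x1 ∧ y0 < q.2 ∧ q.2 < y1) ∧
      (∀ p ∈ Q, ∀ q ∈ Q, p.1 < q.1 → -s * (q.1 - p.1) < q.2 - p.2 ∧ q.2 - p.2 < s * (q.1 - p.1)) ∧
      (∀ k, HasCup k Q → HasCup k P) ∧ (∀ k, HasCap k Q → HasCap k P) ∧
      (∀ k, HasCollinear k Q → HasCollinear k P) := by
  obtain ⟨M, hM, hMs⟩ := exists_slope_bound P hP
  set xmin := P.inf' hne (fun p => p.1) with hxmin
  set xmax := P.sup' hne (fun p => p.1) with hxmax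
  set ymin := P.inf' hne (fun p => p.2) with hymin
  set ymax := P.sup' hne (fun p => p.2) with hymax
  set w := xmax - xmin with hwdef
  set hh := ymax - ymin with hhdef
  obtain ⟨p₀, hp₀⟩ := id hne
  have hw0 : 0 ≤ w := by
    have h1 : xmin ≤ p₀.1 := by rw [hxmin]; exact Finset.inf'_le _ hp₀
    have h2 : p₀.1 ≤ xmax := by rw [hxmax]; exact Finset.le_sup' _ hp₀
    simp only [hwdef]; linarith
  have hh0 : 0 ≤ hh := by
    have h1 : ymin ≤ p₀.2 := by rw [hymin]; exact Finset.inf'_le _ hp₀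
    have h2 : p₀.2 ≤ ymax := by rw [hymax]; exact Finset.le_sup' _ hp₀
    simp only [hhdef]; linarith
  set a := (x1 - x0) / (w + 2) with ha
  have ha0 : 0 < a := by
    have : (0:ℝ) < w + 2 := by linarith
    have : (0:ℝ) < x1 - x0 := by linarith
    positivity
  set b := min (s * a / (2 * M)) ((y1 - y0) / (2 * (hh + 1))) with hb
  have hb0 : 0 < b := by
    refine lt_min (by positivity) ?_
    have : (0:ℝ) < hh + 1 := by linarith
    have : (0:ℝ) < y1 - y0 := by linarith
    positivity
  set c := x0 + a - a * xmin with hc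
  set d := y0 + (y1 - y0)/4 - b * ymin with hd
  have haw : a * (w + 2) = x1 - x0 := by
    rw [ha]; field_simp
  have hbh : b * (hh + 1) ≤ (y1 - y0)/2 := by
    have h1 : b ≤ (y1 - y0) / (2*(hh+1)) := min_le_right _ _
    have h2 : (0:ℝ) < hh + 1 := by linarith
    have h3 : ((y1-y0)/(2*(hh+1))) * (hh+1) = (y1-y0)/2 := by field_simp
    nlinarith
  have hbM : b * M ≤ s * a / 2 := by
    have h1 : b ≤ s * a / (2*M) := min_le_left _ _
    have h2 : (s*a/(2*M))*M = s*a/2 := by field_simp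
    nlinarith
  refine ⟨P.image (aff a b c d), Finset.Nonempty.image hne _, card_image_aff ha0.ne' hb0.ne' P,
    distinctX_image_aff ha0.ne' hP, ?_, ?_, fun k => hasCup_of_image_aff ha0 hb0,
    fun k => hasCap_of_image_aff ha0 hb0, fun k => hasCollinear_of_image_aff ha0.ne' hb0.ne'⟩
  · rintro q hq
    obtain ⟨p, hp, rfl⟩ := Finset.mem_image.mp hq
    have h1 : xmin ≤ p.1 := by rw [hxmin]; exact Finset.inf'_le _ hp
    have h2 : p.1 ≤ xmax := by rw [hxmax]; exact Finset.le_sup' _ hp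
    have h3 : ymin ≤ p.2 := by rw [hymin]; exact Finset.inf'_le _ hp
    have h4 : p.2 ≤ ymax := by rw [hymax]; exact Finset.le_sup' _ hp
    have e1 : a * (p.1 - xmin) ≤ a * w := by
      have : p.1 - xmin ≤ w := by simp only [hwdef]; linarith
      nlinarith
    have e2 : 0 ≤ a * (p.1 - xmin) := by nlinarith
    have e3 : b * (p.2 - ymin) ≤ b * hh := by
      have : p.2 - ymin ≤ hh := by simp only [hhdef]; linarith
      nlinarith
    have e4 : 0 ≤ b * (p.2 - ymin) := by nlinarith
    simp only [aff, hc, hd]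
    refine ⟨by nlinarith, by nlinarith, by nlinarith, by nlinarith⟩
  · rintro p' hp' q' hq' hlt
    obtain ⟨p, hp, rfl⟩ := Finset.mem_image.mp hp'
    obtain ⟨q, hq, rfl⟩ := Finset.mem_image.mp hq'
    simp only [aff] at hlt ⊢
    have hxlt : p.1 < q.1 := by nlinarith
    have hne' : p ≠ q := by
      intro h; rw [h] at hxlt; exact lt_irrefl _ hxlt
    have h5 : |q.2 - p.2| ≤ M * (q.1 - p.1) := by
      have := hMs p hp q hq hne'
      rwa [abs_of_pos (by linarith : (0:ℝ) < q.1 - p.1)] at this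
    have h6 := abs_le.mp h5
    have hdx : (0:ℝ) < q.1 - p.1 := by linarith
    have e5 : b * (q.2 - p.2) ≤ b * (M * (q.1 - p.1)) := by nlinarith [h6.2]
    have e6 : -(b * (M * (q.1 - p.1))) ≤ b * (q.2 - p.2) := by nlinarith [h6.1]
    have e7 : b * (M * (q.1 - p.1)) ≤ (s * a / 2) * (q.1 - p.1) := by nlinarith
    have e8 : (s * a / 2) * (q.1 - p.1) < s * (a * (q.1 - p.1)) := by nlinarith
    constructor <;> nlinarith

end ES

namespace ES

lemma partition {k : ℕ} (p : Fin k → Pt) (L R : Finset Pt)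
    (hmem : ∀ i, p i ∈ L ∪ R)
    (hmono : ∀ i j : Fin k, i < j → (p i).1 < (p j).1)
    (hL : ∀ q ∈ L, q.1 < 1) (hR : ∀ q ∈ R, 2 < q.1) :
    ∃ t ≤ k, (∀ i : Fin k, i.1 < t → p i ∈ L) ∧ (∀ i : Fin k, t ≤ i.1 → p i ∈ R) := by
  classical
  by_cases hall : ∀ i, p i ∈ L
  · exact ⟨k, le_rfl, fun i _ => hall i, fun i hi => absurd i.2 (by omega)⟩
  · push_neg at hall
    obtain ⟨i₀, hi₀⟩ := hall
    have hex : ∃ n : ℕ, ∃ h : n < k, p ⟨n, h⟩ ∉ L := ⟨i₀.1, i₀.2, by simpa using hi₀⟩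
    obtain ⟨htk, hpt⟩ := Nat.find_spec hex
    refine ⟨Nat.find hex, le_of_lt htk, ?_, ?_⟩
    · intro i hi
      by_contra hiL
      exact absurd hi (by
        have := Nat.find_min' hex (⟨i.2, by simpa using hiL⟩ : ∃ h : i.1 < k, p ⟨i.1, h⟩ ∉ L)
        omega)
    · intro i hi
      have hptR : p ⟨Nat.find hex, htk⟩ ∈ R := by
        have := Finset.mem_union.mp (hmem ⟨Nat.find hex, htk⟩)
        tauto
      rcases Finset.mem_union.mp (hmem i) with h | h
      · exfalso
        rcases eq_or_lt_of_le hi with he | hlt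
        · apply hpt
          have hie : (⟨Nat.find hex, htk⟩ : Fin k) = i := by
            apply Fin.ext; simpa using he
          rw [hie]; exact h
        · have hx := hmono ⟨Nat.find hex, htk⟩ i (by rw [Fin.lt_def]; exact hlt)
          have h1 := hL _ h
          have h2 := hR _ hptR
          linarith
      · exact h

lemma combine1 {l m n : ℕ} (hl : 3 ≤ l) (hm : 3 ≤ m) (hn : 3 ≤ n) (L R : Finset Pt)
    (hLbox : ∀ q ∈ L, 0 < q.1 ∧ q.1 < 1 ∧ 0 < q.2 ∧ q.2 < 1)
    (hRbox : ∀ q ∈ R, 2 < q.1 ∧ q.1 < 3 ∧ 10 < q.2 ∧ q.2 < 11)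
    (hLs : ∀ p ∈ L, ∀ q ∈ L, p.1 < q.1 → -1 * (q.1 - p.1) < q.2 - p.2 ∧ q.2 - p.2 < 1 * (q.1 - p.1))
    (hRs : ∀ p ∈ R, ∀ q ∈ R, p.1 < q.1 → -1 * (q.1 - p.1) < q.2 - p.2 ∧ q.2 - p.2 < 1 * (q.1 - p.1))
    (hLd : DistinctX L) (hRd : DistinctX R)
    (hLcup : ¬ HasCup (m-1) L) (hLcap : ¬ HasCap n L) (hLcol : ¬ HasCollinear l L)
    (hRcup : ¬ HasCup m R) (hRcap : ¬ HasCap (n-1) R) (hRcol : ¬ HasCollinear l R) :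
    DistinctX (L ∪ R) ∧ ¬ HasCup m (L ∪ R) ∧ ¬ HasCap n (L ∪ R) ∧ ¬ HasCollinear l (L ∪ R) ∧
      (L ∪ R).card = L.card + R.card := by
  have hdisj : Disjoint L R := by
    rw [Finset.disjoint_left]
    intro q hqL hqR
    linarith [(hLbox q hqL).2.1, (hRbox q hqR).1]
  refine ⟨?_, ?_, ?_, ?_, Finset.card_union_of_disjoint hdisj⟩
  · -- DistinctX
    intro u hu v hv he
    simp only [Finset.coe_union, Set.mem_union, Finset.mem_coe] at hu hv
    rcases hu with hu | hu <;> rcases hv with hv | hv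
    · exact hLd (Finset.mem_coe.mpr hu) (Finset.mem_coe.mpr hv) he
    · exact absurd he (by have := (hLbox u hu).2.1; have := (hRbox v hv).1; intro h; linarith)
    · exact absurd he (by have := (hRbox u hu).1; have := (hLbox v hv).2.1; intro h; linarith)
    · exact hRd (Finset.mem_coe.mpr hu) (Finset.mem_coe.mpr hv) he
  · -- no m-cup
    rintro ⟨p, hmem, hseq⟩
    obtain ⟨t, htk, htL, htR⟩ := partition p L R hmem hseq.1
      (fun q hq => (hLbox q hq).2.1) (fun q hq => (hRbox q hq).1)
    by_cases h1 : m - 1 ≤ t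
    · exact hLcup ⟨fun i : Fin (m-1) => p ⟨0 + i.1, by omega⟩,
        fun i => htL _ (by simpa using by omega : (0 + i.1 : ℕ) < t),
        isCupSeq_slice hseq 0 (m-1) (by omega)⟩
    by_cases h0 : t = 0
    · exact hRcup ⟨p, fun i => htR i (by omega), hseq⟩
    · have h2 : t - 1 + 2 < m := by omega
      have key := hseq.2 (t-1) h2
      have hP0 : p ⟨t-1, by omega⟩ ∈ L := htL _ (by simp; omega)
      have hP1 : p ⟨t-1+1, by omega⟩ ∈ R := htR _ (by simp; omega)
      have hP2 : p ⟨t-1+2, h2⟩ ∈ R := htR _ (by simp; omega)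
      have hx01 : (p ⟨t-1, by omega⟩).1 < (p ⟨t-1+1, by omega⟩).1 :=
        hseq.1 _ _ (by rw [Fin.lt_def]; simp)
      have hx12 : (p ⟨t-1+1, by omega⟩).1 < (p ⟨t-1+2, h2⟩).1 :=
        hseq.1 _ _ (by rw [Fin.lt_def]; simp)
      obtain ⟨hs1, hs2⟩ := hRs _ hP1 _ hP2 hx12
      obtain ⟨b01, b02, b03, b04⟩ := hLbox _ hP0
      obtain ⟨b11, b12, b13, b14⟩ := hRbox _ hP1
      obtain ⟨b21, b22, b23, b24⟩ := hRbox _ hP2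
      nlinarith [key, hs2, mul_pos (sub_pos.mpr hx01) (sub_pos.mpr hx12),
        mul_pos (sub_pos.mpr hx12) (sub_pos.mpr hx01)]
  · -- no n-cap
    rintro ⟨p, hmem, hseq⟩
    obtain ⟨t, htk, htL, htR⟩ := partition p L R hmem hseq.1
      (fun q hq => (hLbox q hq).2.1) (fun q hq => (hRbox q hq).1)
    by_cases h1 : t ≤ 1
    · exact hRcap ⟨fun i : Fin (n-1) => p ⟨1 + i.1, by omega⟩,
        fun i => htR _ (show t ≤ 1 + i.1 by omega),
        isCapSeq_slice hseq 1 (n-1) (by omega)⟩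
    by_cases h0 : t = n
    · exact hLcap ⟨p, fun i => htL i (by omega), hseq⟩
    · have h2 : t - 2 + 2 < n := by omega
      have key := hseq.2 (t-2) h2
      have hP0 : p ⟨t-2, by omega⟩ ∈ L := htL _ (by simp; omega)
      have hP1 : p ⟨t-2+1, by omega⟩ ∈ L := htL _ (by simp; omega)
      have hP2 : p ⟨t-2+2, h2⟩ ∈ R := htR _ (by simp; omega)
      have hx01 : (p ⟨t-2, by omega⟩).1 < (p ⟨t-2+1, by omega⟩).1 :=
        hseq.1 _ _ (by rw [Fin.lt_def]; simp)
      have hx12 : (p ⟨t-2+1, by omega⟩).1 < (p ⟨t-2+2, h2⟩).1 :=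
        hseq.1 _ _ (by rw [Fin.lt_def]; simp)
      obtain ⟨hs1, hs2⟩ := hLs _ hP0 _ hP1 hx01
      obtain ⟨b01, b02, b03, b04⟩ := hLbox _ hP0
      obtain ⟨b11, b12, b13, b14⟩ := hLbox _ hP1
      obtain ⟨b21, b22, b23, b24⟩ := hRbox _ hP2
      nlinarith [key, hs2, mul_pos (sub_pos.mpr hx01) (sub_pos.mpr hx12)]
  · -- no l collinear
    rintro ⟨S, hS, hcard, hcol⟩
    classical
    have hSsub : S ⊆ (S ∩ L) ∪ (S ∩ R) := by
      intro x hx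
      rcases Finset.mem_union.mp (hS hx) with h | h
      · exact Finset.mem_union_left _ (Finset.mem_inter.mpr ⟨hx, h⟩)
      · exact Finset.mem_union_right _ (Finset.mem_inter.mpr ⟨hx, h⟩)
    have hsum : l ≤ (S ∩ L).card + (S ∩ R).card :=
      hcard ▸ (Finset.card_le_card hSsub).trans (Finset.card_union_le _ _)
    have keyA : ∀ a b c : Pt, a ∈ L → b ∈ L → c ∈ R → a ∈ S → b ∈ S → c ∈ S →
        a.1 < b.1 → False := by
      intro a b c haL hbL hcR haS hbS hcS hab
      have hz := collinear_cross_eq_zero hcol (Finset.mem_coe.mpr haS)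
        (Finset.mem_coe.mpr hbS) (Finset.mem_coe.mpr hcS)
      obtain ⟨hs1, hs2⟩ := hLs _ haL _ hbL hab
      obtain ⟨a1, a2, a3, a4⟩ := hLbox _ haL
      obtain ⟨b1, b2, b3, b4⟩ := hLbox _ hbL
      obtain ⟨c1, c2, c3, c4⟩ := hRbox _ hcR
      nlinarith [hz, hs1, hs2, mul_pos (sub_pos.mpr hab) (show (0:ℝ) < c.1 - a.1 by linarith)]
    have keyB : ∀ a b c : Pt, a ∈ L → b ∈ R → c ∈ R → a ∈ S → b ∈ S → c ∈ S →
        b.1 < c.1 → False := by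
      intro a b c haL hbR hcR haS hbS hcS hbc
      have hz := collinear_cross_eq_zero hcol (Finset.mem_coe.mpr haS)
        (Finset.mem_coe.mpr hbS) (Finset.mem_coe.mpr hcS)
      obtain ⟨hs1, hs2⟩ := hRs _ hbR _ hcR hbc
      obtain ⟨a1, a2, a3, a4⟩ := hLbox _ haL
      obtain ⟨b1, b2, b3, b4⟩ := hRbox _ hbR
      obtain ⟨c1, c2, c3, c4⟩ := hRbox _ hcR
      nlinarith [hz, hs1, hs2, mul_pos (sub_pos.mpr hbc) (show (0:ℝ) < b.1 - a.1 by linarith)]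
    by_cases hA : 2 ≤ (S ∩ L).card ∧ 1 ≤ (S ∩ R).card
    · obtain ⟨u, hu, v, hv, huv⟩ := Finset.one_lt_card.mp hA.1
      obtain ⟨r, hr⟩ := Finset.card_pos.mp hA.2
      have huL := (Finset.mem_inter.mp hu).2
      have hvL := (Finset.mem_inter.mp hv).2
      have huS := (Finset.mem_inter.mp hu).1
      have hvS := (Finset.mem_inter.mp hv).1
      have hrR := (Finset.mem_inter.mp hr).2
      have hrS := (Finset.mem_inter.mp hr).1
      have hne : u.1 ≠ v.1 := fun h => huv (hLd (Finset.mem_coe.mpr huL) (Finset.mem_coe.mpr hvL) h)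
      rcases lt_or_gt_of_ne hne with h | h
      · exact keyA u v r huL hvL hrR huS hvS hrS h
      · exact keyA v u r hvL huL hrR hvS huS hrS h
    by_cases hB : 1 ≤ (S ∩ L).card ∧ 2 ≤ (S ∩ R).card
    · obtain ⟨u, hu, v, hv, huv⟩ := Finset.one_lt_card.mp hB.2
      obtain ⟨r, hr⟩ := Finset.card_pos.mp hB.1
      have huR := (Finset.mem_inter.mp hu).2
      have hvR := (Finset.mem_inter.mp hv).2
      have huS := (Finset.mem_inter.mp hu).1
      have hvS := (Finset.mem_inter.mp hv).1
      have hrL := (Finset.mem_inter.mp hr).2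
      have hrS := (Finset.mem_inter.mp hr).1
      have hne : u.1 ≠ v.1 := fun h => huv (hRd (Finset.mem_coe.mpr huR) (Finset.mem_coe.mpr hvR) h)
      rcases lt_or_gt_of_ne hne with h | h
      · exact keyB r u v hrL huR hvR hrS huS hvS h
      · exact keyB r v u hrL hvR huR hrS hvS huS h
    · -- degenerate cases
      by_cases hR0 : (S ∩ R).card = 0
      · apply hLcol
        refine ⟨S, ?_, hcard, hcol⟩
        intro x hx
        rcases Finset.mem_union.mp (hS hx) with h | h
        · exact h
        · exact absurd hR0 (Finset.card_ne_zero_of_mem (Finset.mem_inter.mpr ⟨hx, h⟩))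
      by_cases hL0 : (S ∩ L).card = 0
      · apply hRcol
        refine ⟨S, ?_, hcard, hcol⟩
        intro x hx
        rcases Finset.mem_union.mp (hS hx) with h | h
        · exact absurd hL0 (Finset.card_ne_zero_of_mem (Finset.mem_inter.mpr ⟨hx, h⟩))
        · exact h
      · omega

end ES

namespace ES

lemma combine3 {l a b : ℕ} (hl : 3 ≤ l) (ha : 2 ≤ a) (hb : 2 ≤ b) (L R : Finset Pt)
    (hLbox : ∀ q ∈ L, 0 < q.1 ∧ q.1 < 1 ∧ 0 < q.2 ∧ q.2 < 1)
    (hRbox : ∀ q ∈ R, 2 < q.1 ∧ q.1 < 3 ∧ 3 < q.2 ∧ q.2 < 4)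
    (hLs : ∀ p ∈ L, ∀ q ∈ L, p.1 < q.1 → 4 * (q.1 - p.1) < q.2 - p.2)
    (hRs : ∀ p ∈ R, ∀ q ∈ R, p.1 < q.1 →
      -(1/2) * (q.1 - p.1) < q.2 - p.2 ∧ q.2 - p.2 < (1/2) * (q.1 - p.1))
    (hLd : DistinctX L) (hRd : DistinctX R)
    (hLcup : ¬ HasCup 3 L) (hLcap : ¬ HasCap a L) (hLcol : ¬ HasCollinear l L)
    (hRcup : ¬ HasCup 3 R) (hRcap : ¬ HasCap b R) (hRcol : ¬ HasCollinear l R) :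
    DistinctX (L ∪ R) ∧ ¬ HasCup 3 (L ∪ R) ∧ ¬ HasCap (a + b - 1) (L ∪ R) ∧
      ¬ HasCollinear l (L ∪ R) ∧ (L ∪ R).card = L.card + R.card := by
  have hdisj : Disjoint L R := by
    rw [Finset.disjoint_left]
    intro q hqL hqR
    linarith [(hLbox q hqL).2.1, (hRbox q hqR).1]
  refine ⟨?_, ?_, ?_, ?_, Finset.card_union_of_disjoint hdisj⟩
  · intro u hu v hv he
    simp only [Finset.coe_union, Set.mem_union, Finset.mem_coe] at hu hv
    rcases hu with hu | hu <;> rcases hv with hv | hv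
    · exact hLd (Finset.mem_coe.mpr hu) (Finset.mem_coe.mpr hv) he
    · exact absurd he (by have := (hLbox u hu).2.1; have := (hRbox v hv).1; intro h; linarith)
    · exact absurd he (by have := (hRbox u hu).1; have := (hLbox v hv).2.1; intro h; linarith)
    · exact hRd (Finset.mem_coe.mpr hu) (Finset.mem_coe.mpr hv) he
  · -- no 3-cup
    rintro ⟨p, hmem, hseq⟩
    obtain ⟨t, htk, htL, htR⟩ := partition p L R hmem hseq.1
      (fun q hq => (hLbox q hq).2.1) (fun q hq => (hRbox q hq).1)
    have key := hseq.2 0 (by omega)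
    have hx01 : (p ⟨0, by omega⟩).1 < (p ⟨0+1, by omega⟩).1 :=
      hseq.1 _ _ (by rw [Fin.lt_def]; simp)
    have hx12 : (p ⟨0+1, by omega⟩).1 < (p ⟨0+2, by omega⟩).1 :=
      hseq.1 _ _ (by rw [Fin.lt_def]; simp)
    by_cases h3 : 3 ≤ t
    · exact hLcup ⟨p, fun i => htL i (by omega), hseq⟩
    by_cases h0 : t = 0
    · exact hRcup ⟨p, fun i => htR i (by omega), hseq⟩
    by_cases h1 : t = 1
    · have hP0 : p ⟨0, by omega⟩ ∈ L := htL _ (by simp; omega)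
      have hP1 : p ⟨0+1, by omega⟩ ∈ R := htR _ (show t ≤ 0+1 by omega)
      have hP2 : p ⟨0+2, by omega⟩ ∈ R := htR _ (show t ≤ 0+2 by omega)
      obtain ⟨hs1, hs2⟩ := hRs _ hP1 _ hP2 hx12
      obtain ⟨a01, a02, a03, a04⟩ := hLbox _ hP0
      obtain ⟨a11, a12, a13, a14⟩ := hRbox _ hP1
      obtain ⟨a21, a22, a23, a24⟩ := hRbox _ hP2
      nlinarith [key, hs2, mul_pos (sub_pos.mpr hx01) (sub_pos.mpr hx12)]
    · -- t = 2
      have hP0 : p ⟨0, by omega⟩ ∈ L := htL _ (by simp; omega)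
      have hP1 : p ⟨0+1, by omega⟩ ∈ L := htL _ (by simp; omega)
      have hP2 : p ⟨0+2, by omega⟩ ∈ R := htR _ (show t ≤ 0+2 by omega)
      have hs1 := hLs _ hP0 _ hP1 hx01
      obtain ⟨a01, a02, a03, a04⟩ := hLbox _ hP0
      obtain ⟨a11, a12, a13, a14⟩ := hLbox _ hP1
      obtain ⟨a21, a22, a23, a24⟩ := hRbox _ hP2
      nlinarith [key, hs1, mul_pos (sub_pos.mpr hx01) (sub_pos.mpr hx12),
        mul_pos (sub_pos.mpr hx01) (show (0:ℝ) < (p ⟨0+2, by omega⟩).1 - (p ⟨0, by omega⟩).1 by linarith)]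
  · -- no (a+b-1)-cap
    rintro ⟨p, hmem, hseq⟩
    obtain ⟨t, htk, htL, htR⟩ := partition p L R hmem hseq.1
      (fun q hq => (hLbox q hq).2.1) (fun q hq => (hRbox q hq).1)
    by_cases hta : a ≤ t
    · exact hLcap ⟨fun i : Fin a => p ⟨0 + i.1, by omega⟩,
        fun i => htL _ (show (0 + i.1 : ℕ) < t by omega),
        isCapSeq_slice hseq 0 a (by omega)⟩
    by_cases htb : t ≤ a + b - 1 - b
    · exact hRcap ⟨fun i : Fin b => p ⟨(a + b - 1 - b) + i.1, by omega⟩,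
        fun i => htR _ (show t ≤ (a + b - 1 - b) + i.1 by omega),
        isCapSeq_slice hseq (a + b - 1 - b) b (by omega)⟩
    · omega
  · -- no l collinear
    rintro ⟨S, hS, hcard, hcol⟩
    classical
    have hSsub : S ⊆ (S ∩ L) ∪ (S ∩ R) := by
      intro x hx
      rcases Finset.mem_union.mp (hS hx) with h | h
      · exact Finset.mem_union_left _ (Finset.mem_inter.mpr ⟨hx, h⟩)
      · exact Finset.mem_union_right _ (Finset.mem_inter.mpr ⟨hx, h⟩)
    have hsum : l ≤ (S ∩ L).card + (S ∩ R).card :=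
      hcard ▸ (Finset.card_le_card hSsub).trans (Finset.card_union_le _ _)
    have keyA : ∀ u v w : Pt, u ∈ L → v ∈ L → w ∈ R → u ∈ S → v ∈ S → w ∈ S →
        u.1 < v.1 → False := by
      intro u v w huL hvL hwR huS hvS hwS huv
      have hz := collinear_cross_eq_zero hcol (Finset.mem_coe.mpr huS)
        (Finset.mem_coe.mpr hvS) (Finset.mem_coe.mpr hwS)
      have hs1 := hLs _ huL _ hvL huv
      obtain ⟨a1, a2, a3, a4⟩ := hLbox _ huL
      obtain ⟨b1, b2, b3, b4⟩ := hLbox _ hvL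
      obtain ⟨c1, c2, c3, c4⟩ := hRbox _ hwR
      nlinarith [hz, hs1, mul_pos (sub_pos.mpr huv) (show (0:ℝ) < w.1 - u.1 by linarith)]
    have keyB : ∀ u v w : Pt, u ∈ L → v ∈ R → w ∈ R → u ∈ S → v ∈ S → w ∈ S →
        v.1 < w.1 → False := by
      intro u v w huL hvR hwR huS hvS hwS hvw
      have hz := collinear_cross_eq_zero hcol (Finset.mem_coe.mpr huS)
        (Finset.mem_coe.mpr hvS) (Finset.mem_coe.mpr hwS)
      obtain ⟨hs1, hs2⟩ := hRs _ hvR _ hwR hvw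
      obtain ⟨a1, a2, a3, a4⟩ := hLbox _ huL
      obtain ⟨b1, b2, b3, b4⟩ := hRbox _ hvR
      obtain ⟨c1, c2, c3, c4⟩ := hRbox _ hwR
      nlinarith [hz, hs1, hs2, mul_pos (sub_pos.mpr hvw) (show (0:ℝ) < v.1 - u.1 by linarith)]
    by_cases hA : 2 ≤ (S ∩ L).card ∧ 1 ≤ (S ∩ R).card
    · obtain ⟨u, hu, v, hv, huv⟩ := Finset.one_lt_card.mp hA.1
      obtain ⟨r, hr⟩ := Finset.card_pos.mp hA.2
      have huL := (Finset.mem_inter.mp hu).2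
      have hvL := (Finset.mem_inter.mp hv).2
      have huS := (Finset.mem_inter.mp hu).1
      have hvS := (Finset.mem_inter.mp hv).1
      have hrR := (Finset.mem_inter.mp hr).2
      have hrS := (Finset.mem_inter.mp hr).1
      have hne : u.1 ≠ v.1 := fun h => huv (hLd (Finset.mem_coe.mpr huL) (Finset.mem_coe.mpr hvL) h)
      rcases lt_or_gt_of_ne hne with h | h
      · exact keyA u v r huL hvL hrR huS hvS hrS h
      · exact keyA v u r hvL huL hrR hvS huS hrS h
    by_cases hB : 1 ≤ (S ∩ L).card ∧ 2 ≤ (S ∩ R).card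
    · obtain ⟨u, hu, v, hv, huv⟩ := Finset.one_lt_card.mp hB.2
      obtain ⟨r, hr⟩ := Finset.card_pos.mp hB.1
      have huR := (Finset.mem_inter.mp hu).2
      have hvR := (Finset.mem_inter.mp hv).2
      have huS := (Finset.mem_inter.mp hu).1
      have hvS := (Finset.mem_inter.mp hv).1
      have hrL := (Finset.mem_inter.mp hr).2
      have hrS := (Finset.mem_inter.mp hr).1
      have hne : u.1 ≠ v.1 := fun h => huv (hRd (Finset.mem_coe.mpr huR) (Finset.mem_coe.mpr hvR) h)
      rcases lt_or_gt_of_ne hne with h | h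
      · exact keyB r u v hrL huR hvR hrS huS hvS h
      · exact keyB r v u hrL hvR huR hrS hvS huS h
    · by_cases hR0 : (S ∩ R).card = 0
      · apply hLcol
        refine ⟨S, ?_, hcard, hcol⟩
        intro x hx
        rcases Finset.mem_union.mp (hS hx) with h | h
        · exact h
        · exact absurd hR0 (Finset.card_ne_zero_of_mem (Finset.mem_inter.mpr ⟨hx, h⟩))
      by_cases hL0 : (S ∩ L).card = 0
      · apply hRcol
        refine ⟨S, ?_, hcard, hcol⟩
        intro x hx
        rcases Finset.mem_union.mp (hS hx) with h | h
        · exact absurd hL0 (Finset.card_ne_zero_of_mem (Finset.mem_inter.mpr ⟨hx, h⟩))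
        · exact h
      · omega

end ES

namespace ES

def eps (l : ℕ) : ℝ := 1 / (100 * ((l:ℝ) + 1))

lemma eps_pos (l : ℕ) : 0 < eps l := by unfold eps; positivity

def runf (l : ℕ) (s : ℕ) : Pt :=
  ((1:ℝ)/2 + (s:ℝ) * eps l, 5 * ((1:ℝ)/2 + (s:ℝ) * eps l) - 2)

def run (l : ℕ) : Finset Pt := (Finset.range (l-1)).image (runf l)

lemma run_x_bound {l s : ℕ} (hs : s < l - 1) : (s:ℝ) * eps l < 1/100 := by
  have h1 : (s:ℝ) < (l:ℝ) + 1 := by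
    have : s < l + 1 := by omega
    exact_mod_cast this
  unfold eps
  rw [mul_one_div, div_lt_div_iff₀ (by positivity) (by norm_num)]
  linarith

lemma run_box {l : ℕ} : ∀ q ∈ run l, 0 < q.1 ∧ q.1 < 1 ∧ 0 < q.2 ∧ q.2 < 1 := by
  intro q hq
  obtain ⟨s, hs, rfl⟩ := Finset.mem_image.mp hq
  rw [Finset.mem_range] at hs
  have h1 := run_x_bound hs
  have h2 : (0:ℝ) ≤ (s:ℝ) * eps l := mul_nonneg (Nat.cast_nonneg s) (eps_pos l).le
  refine ⟨?_, ?_, ?_, ?_⟩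
  · show (0:ℝ) < 1/2 + (s:ℝ) * eps l; linarith
  · show (1:ℝ)/2 + (s:ℝ) * eps l < 1; linarith
  · show (0:ℝ) < 5 * ((1:ℝ)/2 + (s:ℝ) * eps l) - 2; linarith
  · show 5 * ((1:ℝ)/2 + (s:ℝ) * eps l) - 2 < 1; linarith

lemma run_snd {l : ℕ} : ∀ q ∈ run l, q.2 = 5 * q.1 - 2 := by
  intro q hq
  obtain ⟨s, hs, rfl⟩ := Finset.mem_image.mp hq
  rfl

lemma run_distinctX {l : ℕ} : DistinctX (run l) := by
  intro u hu v hv he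
  have h1 := run_snd u (Finset.mem_coe.mp hu)
  have h2 := run_snd v (Finset.mem_coe.mp hv)
  exact Prod.ext he (by rw [h1, h2, he])

lemma run_card {l : ℕ} : (run l).card = l - 1 := by
  rw [run, Finset.card_image_of_injOn, Finset.card_range]
  intro s hs s' hs' he
  have h1 : ((1:ℝ)/2 + (s:ℝ) * eps l) = ((1:ℝ)/2 + (s':ℝ) * eps l) := congrArg Prod.fst he
  have h2 : (s:ℝ) = (s':ℝ) := by
    have := mul_right_cancel₀ (eps_pos l).ne' (by linarith : (s:ℝ) * eps l = (s':ℝ) * eps l)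
    exact this
  exact_mod_cast h2

lemma run_slope {l : ℕ} : ∀ p ∈ run l, ∀ q ∈ run l, p.1 < q.1 → 4 * (q.1 - p.1) < q.2 - p.2 := by
  intro p hp q hq h
  have h1 := run_snd p hp
  have h2 := run_snd q hq
  rw [h1, h2]
  linarith

lemma run_nocup {l : ℕ} : ¬ HasCup 3 (run l) := by
  rintro ⟨p, hm, hs⟩
  have key := hs.2 0 (by omega)
  have e0 := run_snd _ (hm ⟨0, by omega⟩)
  have e1 := run_snd _ (hm ⟨0+1, by omega⟩)
  have e2 := run_snd _ (hm ⟨0+2, by omega⟩)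
  rw [e0, e1, e2] at key
  nlinarith [key]

lemma run_nocap {l : ℕ} : ¬ HasCap 3 (run l) := by
  rintro ⟨p, hm, hs⟩
  have key := hs.2 0 (by omega)
  have e0 := run_snd _ (hm ⟨0, by omega⟩)
  have e1 := run_snd _ (hm ⟨0+1, by omega⟩)
  have e2 := run_snd _ (hm ⟨0+2, by omega⟩)
  rw [e0, e1, e2] at key
  nlinarith [key]

lemma run_nocol {l : ℕ} (hl : 3 ≤ l) : ¬ HasCollinear l (run l) := by
  rintro ⟨S, hS, hcard, -⟩
  have := Finset.card_le_card hS
  rw [hcard, run_card] at this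
  omega

lemma run_nonempty {l : ℕ} (hl : 3 ≤ l) : (run l).Nonempty := by
  rw [run]
  apply Finset.Nonempty.image
  rw [Finset.nonempty_range_iff]
  omega

def onept : Finset Pt := {((1:ℝ)/2, (1:ℝ)/2)}

lemma onept_box : ∀ q ∈ onept, 0 < q.1 ∧ q.1 < 1 ∧ 0 < q.2 ∧ q.2 < 1 := by
  intro q hq
  rw [onept, Finset.mem_singleton] at hq
  subst hq
  norm_num

lemma onept_slope : ∀ p ∈ onept, ∀ q ∈ onept, p.1 < q.1 → 4 * (q.1 - p.1) < q.2 - p.2 := by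
  intro p hp q hq h
  rw [onept, Finset.mem_singleton] at hp hq
  subst hp; subst hq
  exact absurd h (lt_irrefl _)

lemma onept_distinctX : DistinctX onept := by
  intro u hu v hv _
  simp only [onept, Finset.coe_singleton, Set.mem_singleton_iff] at hu hv
  rw [hu, hv]

lemma onept_nocup : ¬ HasCup 3 onept := by
  rintro ⟨p, hm, hs⟩
  have h0 := hm ⟨0, by omega⟩
  have h1 := hm ⟨1, by omega⟩
  rw [onept, Finset.mem_singleton] at h0 h1
  have := hs.1 ⟨0, by omega⟩ ⟨1, by omega⟩ (by rw [Fin.lt_def]; norm_num)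
  rw [h0, h1] at this
  exact absurd this (lt_irrefl _)

lemma onept_nocap : ¬ HasCap 2 onept := by
  rintro ⟨p, hm, hs⟩
  have h0 := hm ⟨0, by omega⟩
  have h1 := hm ⟨1, by omega⟩
  rw [onept, Finset.mem_singleton] at h0 h1
  have := hs.1 ⟨0, by omega⟩ ⟨1, by omega⟩ (by rw [Fin.lt_def]; norm_num)
  rw [h0, h1] at this
  exact absurd this (lt_irrefl _)

lemma onept_nocol {l : ℕ} (hl : 3 ≤ l) : ¬ HasCollinear l onept := by
  rintro ⟨S, hS, hcard, -⟩
  have := Finset.card_le_card hS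
  rw [hcard] at this
  simp [onept] at this
  omega

lemma chain {l : ℕ} (hl : 3 ≤ l) : ∀ j : ℕ, 1 ≤ j → ∃ C : Finset Pt, C.Nonempty ∧ DistinctX C ∧
    ¬ HasCup 3 C ∧ ¬ HasCap (2*j+1) C ∧ ¬ HasCollinear l C ∧ C.card = j * (l-1) := by
  intro j
  induction j with
  | zero => omega
  | succ j ih =>
    intro _
    by_cases hj : j = 0
    · subst hj
      refine ⟨run l, run_nonempty hl, run_distinctX, run_nocup, ?_, run_nocol hl, by rw [run_card]; ring⟩
      show ¬ HasCap 3 (run l)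
      exact run_nocap
    · obtain ⟨C, hCne, hCd, hCcup, hCcap, hCcol, hCcard⟩ := ih (by omega)
      obtain ⟨Q, hQne, hQcard, hQd, hQbox, hQs, hQcup, hQcap, hQcol⟩ :=
        normalize C hCne hCd 2 3 3 4 (1/2) (by norm_num) (by norm_num) (by norm_num)
      obtain ⟨hd, hcup, hcap, hcol, hcard⟩ :=
        combine3 (a := 3) (b := 2*j+1) hl (by omega) (by omega) (run l) Q
          run_box hQbox run_slope hQs run_distinctX hQd
          run_nocup run_nocap (run_nocol hl)
          (fun h => hCcup (hQcup 3 h)) (fun h => hCcap (hQcap _ h)) (fun h => hCcol (hQcol _ h))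
      refine ⟨run l ∪ Q, ?_, hd, hcup, ?_, hcol, ?_⟩
      · exact Finset.Nonempty.mono Finset.subset_union_left (run_nonempty hl)
      · have he : 3 + (2*j+1) - 1 = 2*(j+1)+1 := by omega
        rw [← he]
        exact hcap
      · rw [hcard, run_card, hQcard, hCcard]
        ring

lemma base3 {l : ℕ} (hl : 3 ≤ l) (n : ℕ) (hn : 3 ≤ n) :
    ∃ C : Finset Pt, C.Nonempty ∧ DistinctX C ∧ ¬ HasCup 3 C ∧ ¬ HasCap n C ∧
      ¬ HasCollinear l C ∧ (l-1) * (n-1) - (l-3) ≤ 2 * C.card := by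
  rcases Nat.even_or_odd n with he | ho
  · -- n even, n = 2k+2
    obtain ⟨k, hk⟩ : ∃ k, n = 2*k + 2 := by
      obtain ⟨r, hr⟩ := he; exact ⟨r - 1, by omega⟩
    have hk1 : 1 ≤ k := by omega
    obtain ⟨C, hCne, hCd, hCcup, hCcap, hCcol, hCcard⟩ := chain hl k hk1
    obtain ⟨Q, hQne, hQcard, hQd, hQbox, hQs, hQcup, hQcap, hQcol⟩ :=
      normalize C hCne hCd 2 3 3 4 (1/2) (by norm_num) (by norm_num) (by norm_num)
    obtain ⟨hd, hcup, hcap, hcol, hcard⟩ :=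
      combine3 (a := 2) (b := 2*k+1) hl (by omega) (by omega) onept Q
        onept_box hQbox onept_slope hQs onept_distinctX hQd
        onept_nocup onept_nocap (onept_nocol hl)
        (fun h => hCcup (hQcup 3 h)) (fun h => hCcap (hQcap _ h)) (fun h => hCcol (hQcol _ h))
    refine ⟨onept ∪ Q, Finset.Nonempty.mono Finset.subset_union_right hQne, hd, hcup, ?_, hcol, ?_⟩
    · have he2 : 2 + (2*k+1) - 1 = n := by omega
      rw [← he2]
      exact hcap
    · have hone : onept.card = 1 := rfl
      rw [hcard, hone, hQcard, hCcard]
      have h1 : n - 1 = 2*k + 1 := by omega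
      rw [h1]
      have h2 : (l-1) * (2*k+1) = 2*((l-1)*k) + (l-1) := by ring
      have h3 : 2 * (1 + k * (l-1)) = 2 + 2*(k*(l-1)) := by ring
      have h4 : (l-1)*k = k*(l-1) := by ring
      omega
  · -- n odd, n = 2k+1
    obtain ⟨k, hk⟩ := ho
    have hk1 : 1 ≤ k := by omega
    obtain ⟨C, hCne, hCd, hCcup, hCcap, hCcol, hCcard⟩ := chain hl k hk1
    refine ⟨C, hCne, hCd, hCcup, by rw [hk]; exact hCcap, hCcol, ?_⟩
    rw [hCcard]
    have h1 : n - 1 = 2*k := by omega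
    rw [h1]
    have h2 : (l-1) * (2*k) = 2*(k*(l-1)) := by ring
    omega

lemma base3' {l : ℕ} (hl : 3 ≤ l) (m : ℕ) (hm : 3 ≤ m) :
    ∃ C : Finset Pt, C.Nonempty ∧ DistinctX C ∧ ¬ HasCup m C ∧ ¬ HasCap 3 C ∧
      ¬ HasCollinear l C ∧ (l-1) * (m-1) - (l-3) ≤ 2 * C.card := by
  obtain ⟨C, hCne, hCd, hCcup, hCcap, hCcol, hCb⟩ := base3 hl m hm
  refine ⟨C.image mir, Finset.Nonempty.image hCne _, distinctX_image_mir hCd,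
    fun h => hCcap (hasCap_of_image_mir h), fun h => hCcup (hasCup_of_image_mir h),
    fun h => hCcol (hasCollinear_of_image_mir h), ?_⟩
  rw [show mir = aff 1 (-1) 0 0 from rfl, card_image_aff one_ne_zero (by norm_num) C]
  exact hCb

end ES

namespace ES

lemma main {l : ℕ} (hl : 3 ≤ l) : ∀ s m n : ℕ, 3 ≤ m → 3 ≤ n → m + n ≤ s →
    ∃ P : Finset Pt, P.Nonempty ∧ DistinctX P ∧ ¬ HasCup m P ∧ ¬ HasCap n P ∧
      ¬ HasCollinear l P ∧
      (l - 1) * (m + n - 4).choose (n - 2) - (l - 3) * (m + n - 6).choose (n - 3) ≤ 2 * P.card := by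
  intro s
  induction s with
  | zero => intro m n hm hn h; omega
  | succ s ih =>
    intro m n hm hn hs
    by_cases hm3 : m = 3
    · subst hm3
      obtain ⟨C, hne, hd, hcup, hcap, hcol, hb⟩ := base3 hl n hn
      refine ⟨C, hne, hd, hcup, hcap, hcol, ?_⟩
      have e1 : 3 + n - 4 = n - 1 := by omega
      have e2 : 3 + n - 6 = n - 3 := by omega
      rw [e1, e2, Nat.choose_self]
      have e3 : (n-1).choose (n-2) = n - 1 := by
        have h4 : (n-1) - (n-2) = 1 := by omega
        rw [← Nat.choose_symm (by omega : n-2 ≤ n-1), h4, Nat.choose_one_right]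
      rw [e3, mul_one]
      exact hb
    by_cases hn3 : n = 3
    · subst hn3
      obtain ⟨C, hne, hd, hcup, hcap, hcol, hb⟩ := base3' hl m hm
      refine ⟨C, hne, hd, hcup, hcap, hcol, ?_⟩
      have e1 : m + 3 - 4 = m - 1 := by omega
      have e2 : m + 3 - 6 = m - 3 := by omega
      have e4 : (3:ℕ) - 2 = 1 := rfl
      have e5 : (3:ℕ) - 3 = 0 := rfl
      rw [e1, e2, e4, e5, Nat.choose_zero_right, Nat.choose_one_right, mul_one]
      exact hb
    · obtain ⟨A, hAne, hAd, hAcup, hAcap, hAcol, hAb⟩ := ih (m-1) n (by omega) hn (by omega)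
      obtain ⟨B, hBne, hBd, hBcup, hBcap, hBcol, hBb⟩ := ih m (n-1) hm (by omega) (by omega)
      obtain ⟨L, hLne, hLcard, hLd, hLbox, hLs, hLcupT, hLcapT, hLcolT⟩ :=
        normalize A hAne hAd 0 1 0 1 1 (by norm_num) (by norm_num) (by norm_num)
      obtain ⟨R, hRne, hRcard, hRd, hRbox, hRs, hRcupT, hRcapT, hRcolT⟩ :=
        normalize B hBne hBd 2 3 10 11 1 (by norm_num) (by norm_num) (by norm_num)
      obtain ⟨hd, hcup, hcap, hcol, hcard⟩ := combine1 hl hm hn L R hLbox hRbox hLs hRs hLd hRd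
        (fun h => hAcup (hLcupT _ h)) (fun h => hAcap (hLcapT _ h)) (fun h => hAcol (hLcolT _ h))
        (fun h => hBcup (hRcupT _ h)) (fun h => hBcap (hRcapT _ h)) (fun h => hBcol (hRcolT _ h))
      refine ⟨L ∪ R, Finset.Nonempty.mono Finset.subset_union_left hLne, hd, hcup, hcap, hcol, ?_⟩
      rw [hcard, hLcard, hRcard]
      obtain ⟨m', rfl⟩ : ∃ m', m = m' + 4 := ⟨m - 4, by omega⟩
      obtain ⟨n', rfl⟩ : ∃ n', n = n' + 4 := ⟨n - 4, by omega⟩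
      have eA1 : m' + 4 - 1 + (n' + 4) - 4 = m' + n' + 3 := by omega
      have eA2 : m' + 4 - 1 + (n' + 4) - 6 = m' + n' + 1 := by omega
      have eA3 : n' + 4 - 2 = n' + 2 := by omega
      have eA4 : n' + 4 - 3 = n' + 1 := by omega
      rw [eA1, eA2, eA3, eA4] at hAb
      have eB1 : m' + 4 + (n' + 4 - 1) - 4 = m' + n' + 3 := by omega
      have eB2 : m' + 4 + (n' + 4 - 1) - 6 = m' + n' + 1 := by omega
      have eB3 : n' + 4 - 1 - 2 = n' + 1 := by omega
      have eB4 : n' + 4 - 1 - 3 = n' := by omega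
      rw [eB1, eB2, eB3, eB4] at hBb
      have eG1 : m' + 4 + (n' + 4) - 4 = m' + n' + 4 := by omega
      have eG2 : m' + 4 + (n' + 4) - 6 = m' + n' + 2 := by omega
      rw [eG1, eG2, eA3, eA4]
      have p1 : (m' + n' + 4).choose (n' + 2)
          = (m'+n'+3).choose (n'+1) + (m'+n'+3).choose (n'+2) := Nat.choose_succ_succ' _ _
      have p2 : (m' + n' + 2).choose (n' + 1)
          = (m'+n'+1).choose n' + (m'+n'+1).choose (n'+1) := Nat.choose_succ_succ' _ _
      rw [p1, p2]
      have q1 : (l-1) * ((m'+n'+3).choose (n'+1) + (m'+n'+3).choose (n'+2))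
          = (l-1) * (m'+n'+3).choose (n'+1) + (l-1) * (m'+n'+3).choose (n'+2) := by ring
      have q2 : (l-3) * ((m'+n'+1).choose n' + (m'+n'+1).choose (n'+1))
          = (l-3) * (m'+n'+1).choose n' + (l-3) * (m'+n'+1).choose (n'+1) := by ring
      rw [q1, q2]
      obtain ⟨a1, ha1⟩ : ∃ x, (l-1) * (m'+n'+3).choose (n'+1) = x := ⟨_, rfl⟩
      obtain ⟨a2, ha2⟩ : ∃ x, (l-1) * (m'+n'+3).choose (n'+2) = x := ⟨_, rfl⟩
      obtain ⟨b1, hb1⟩ : ∃ x, (l-3) * (m'+n'+1).choose n' = x := ⟨_, rfl⟩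
      obtain ⟨b2, hb2⟩ : ∃ x, (l-3) * (m'+n'+1).choose (n'+1) = x := ⟨_, rfl⟩
      rw [ha1, ha2, hb1, hb2]
      rw [ha2, hb2] at hAb
      rw [ha1, hb1] at hBb
      omega

end ES


/-- **Theorem 4 (lower bound for `f_ℓ(m,n)`).** For all `m, n, ℓ ≥ 3` there is a finite planar
point set with pairwise distinct x-coordinates, no `ℓ` collinear points, no `m`-cup and no
`n`-cap, with `2·|P| ≥ (ℓ−1)·binom(m+n−4,n−2) − (ℓ−3)·binom(m+n−6,n−3)`. -/
theorem stmt3 :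
    ∀ m n l : ℕ, 3 ≤ m → 3 ≤ n → 3 ≤ l → ∃ P : Finset Pt,
      DistinctX P ∧
      ¬ HasCollinear l P ∧ ¬ HasCup m P ∧ ¬ HasCap n P ∧
      (l - 1) * (m + n - 4).choose (n - 2) - (l - 3) * (m + n - 6).choose (n - 3)
        ≤ 2 * P.card := by
  intro m n l hm hn hl
  obtain ⟨P, _, hd, hcup, hcap, hcol, hb⟩ := ES.main hl (m+n) m n hm hn le_rfl
  exact ⟨P, hd, hcol, hcup, hcap, hb⟩

end
end

section
/- Let ℓ ≥ 3 and m, n ≥ 4 be integers. Suppose there exists a finite set A ⊆ ℝ² with pairwise distinct x-coordinates, of cardinality a, containing no ℓ collinear points, no (m−1)-cup, and no n-cap; and suppose there exists a finite set B ⊆ ℝ² with pairwise distinct x-coordinates, of cardinality b, containing no ℓ collinear points, no m-cup, and no (n−1)-cap. Then there exists a finite set X ⊆ ℝ² with pairwise distinct x-coordinates, of cardinality a + b, containing no ℓ collinear points, no m-cup, and no n-cap. (Equivalently, f_ℓ(m,n) − 1 ≥ (f_ℓ(m−1,n) − 1) + (f_ℓ(m,n−1) − 1).) -/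
open Finset

noncomputable section

/-! Translate `B` to the right of `A` and then so high up that any two points of `A` followed by a
point of `B` form a cup, and any point of `A` followed by two points of `B` form a cap. Along the
x-order, a cup of `A ∪ B` then has at most one point in `B` unless it lies in `B`, so it is at most
one point longer than a cup of `A`; symmetrically a cap has at most one point in `A` unless it lies
in `A`. A line meeting both `A` and `B` contains at most two of their points. -/

open Pointwise Filter

/-- Twice the signed area of the triangle `p q r`; for `p.1 < q.1 < r.1` it is positive on a cup
and negative on a cap. -/
def cross (p q r : Pt) : ℝ := (q.1 - p.1) * (r.2 - p.2) - (q.2 - p.2) * (r.1 - p.1)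

lemma cross_swap_left (p q r : Pt) : cross q p r = -cross p q r := by
  unfold cross; ring

lemma cross_swap_right (p q r : Pt) : cross p r q = -cross p q r := by
  unfold cross; ring

lemma Collinear.cross_eq_zero {S : Set Pt} (hS : Collinear ℝ S) {p q r : Pt}
    (hp : p ∈ S) (hq : q ∈ S) (hr : r ∈ S) : cross p q r = 0 := by
  obtain ⟨v, hv⟩ := (collinear_iff_of_mem hp).1 hS
  obtain ⟨s, rfl⟩ := hv q hq
  obtain ⟨t, rfl⟩ := hv r hr
  simp only [cross, vadd_eq_add, Prod.fst_add, Prod.snd_add, Prod.smul_fst, Prod.smul_snd,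
    smul_eq_mul]
  ring

section Sequences

variable {k : ℕ} {p : Fin k → Pt}

lemma IsCupSeq.cross_pos (hp : IsCupSeq p) (i : ℕ) (hi : i + 2 < k) :
    0 < cross (p ⟨i, by omega⟩) (p ⟨i + 1, by omega⟩) (p ⟨i + 2, hi⟩) := by
  have := hp.2 i hi
  unfold cross; linarith

lemma IsCapSeq.cross_neg (hp : IsCapSeq p) (i : ℕ) (hi : i + 2 < k) :
    cross (p ⟨i, by omega⟩) (p ⟨i + 1, by omega⟩) (p ⟨i + 2, hi⟩) < 0 := by
  have := hp.2 i hi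
  unfold cross; linarith

lemma IsCupSeq.segment (hp : IsCupSeq p) (s t : ℕ) (hst : s + t ≤ k) :
    IsCupSeq (fun j : Fin t => p ⟨s + j, by omega⟩) :=
  ⟨fun i j hij => hp.1 _ _ (Fin.mk_lt_mk.2 (by have := Fin.lt_def.1 hij; omega)),
    fun i hi => hp.2 (s + i) (by omega)⟩

lemma IsCapSeq.segment (hp : IsCapSeq p) (s t : ℕ) (hst : s + t ≤ k) :
    IsCapSeq (fun j : Fin t => p ⟨s + j, by omega⟩) :=
  ⟨fun i j hij => hp.1 _ _ (Fin.mk_lt_mk.2 (by have := Fin.lt_def.1 hij; omega)),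
    fun i hi => hp.2 (s + i) (by omega)⟩

lemma IsCupSeq.vadd (hp : IsCupSeq p) (v : Pt) : IsCupSeq (fun i => v +ᵥ p i) := by
  simpa only [IsCupSeq, vadd_eq_add, Prod.fst_add, Prod.snd_add, add_sub_add_left_eq_sub,
    add_lt_add_iff_left] using hp

lemma IsCapSeq.vadd (hp : IsCapSeq p) (v : Pt) : IsCapSeq (fun i => v +ᵥ p i) := by
  simpa only [IsCapSeq, vadd_eq_add, Prod.fst_add, Prod.snd_add, add_sub_add_left_eq_sub,
    add_lt_add_iff_left] using hp

end Sequences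

section Translation

variable {P : Finset Pt} (v : Pt)

lemma DistinctX.vadd (hP : DistinctX P) : DistinctX (v +ᵥ P) := by
  rintro _ hx' _ hy' h
  obtain ⟨x, hx, rfl⟩ := mem_vadd_finset.1 hx'
  obtain ⟨y, hy, rfl⟩ := mem_vadd_finset.1 hy'
  simp only [vadd_eq_add, Prod.fst_add, add_right_inj] at h
  rw [hP hx hy h]

lemma HasCollinear.vadd {l : ℕ} (h : HasCollinear l P) : HasCollinear l (v +ᵥ P) := by
  obtain ⟨S, hSP, hcard, hS⟩ := h
  refine ⟨v +ᵥ S, vadd_finset_subset_vadd_finset hSP, by rw [card_vadd_finset, hcard], ?_⟩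
  rwa [coe_vadd_finset, Collinear, vectorSpan_vadd]

lemma HasCup.vadd {k : ℕ} (h : HasCup k P) : HasCup k (v +ᵥ P) := by
  obtain ⟨p, hpP, hp⟩ := h
  exact ⟨_, fun i => vadd_mem_vadd_finset (hpP i), hp.vadd v⟩

lemma HasCap.vadd {k : ℕ} (h : HasCap k P) : HasCap k (v +ᵥ P) := by
  obtain ⟨p, hpP, hp⟩ := h
  exact ⟨_, fun i => vadd_mem_vadd_finset (hpP i), hp.vadd v⟩

lemma hasCollinear_vadd_iff {l : ℕ} : HasCollinear l (v +ᵥ P) ↔ HasCollinear l P :=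
  ⟨fun h => by simpa using h.vadd (-v), HasCollinear.vadd v⟩

lemma hasCup_vadd_iff {k : ℕ} : HasCup k (v +ᵥ P) ↔ HasCup k P :=
  ⟨fun h => by simpa using h.vadd (-v), HasCup.vadd v⟩

lemma hasCap_vadd_iff {k : ℕ} : HasCap k (v +ᵥ P) ↔ HasCap k P :=
  ⟨fun h => by simpa using h.vadd (-v), HasCap.vadd v⟩

end Translation

structure Glueable (A B : Finset Pt) : Prop where
  fst_lt : ∀ a ∈ A, ∀ b ∈ B, a.1 < b.1
  cross_pos : ∀ a ∈ A, ∀ a' ∈ A, a.1 < a'.1 → ∀ b ∈ B, 0 < cross a a' b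
  cross_neg : ∀ a ∈ A, ∀ b ∈ B, ∀ b' ∈ B, b.1 < b'.1 → cross a b b' < 0

namespace Glueable

variable {A B : Finset Pt}

lemma disjoint (hAB : Glueable A B) : Disjoint A B :=
  Finset.disjoint_left.2 fun a ha hb => (hAB.fst_lt a ha a hb).false

lemma distinctX_union (hAB : Glueable A B) (hA : DistinctX A) (hB : DistinctX B) :
    DistinctX (A ∪ B) := by
  intro x hx y hy hxy
  simp only [coe_union, Set.mem_union, mem_coe] at hx hy
  rcases hx with hx | hx <;> rcases hy with hy | hy
  · exact hA hx hy hxy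
  · exact absurd hxy (hAB.fst_lt x hx y hy).ne
  · exact absurd hxy (hAB.fst_lt y hy x hx).ne'
  · exact hB hx hy hxy

lemma cross_ne_zero_left (hAB : Glueable A B) (hA : DistinctX A) {a a' b : Pt} (ha : a ∈ A)
    (ha' : a' ∈ A) (hne : a ≠ a') (hb : b ∈ B) : cross a a' b ≠ 0 := by
  rcases lt_or_gt_of_ne (mt (hA ha ha') hne) with h | h
  · exact (hAB.cross_pos a ha a' ha' h b hb).ne'
  · rw [← neg_ne_zero, ← cross_swap_left]
    exact (hAB.cross_pos a' ha' a ha h b hb).ne'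

lemma cross_ne_zero_right (hAB : Glueable A B) (hB : DistinctX B) {a b b' : Pt} (ha : a ∈ A)
    (hb : b ∈ B) (hb' : b' ∈ B) (hne : b ≠ b') : cross a b b' ≠ 0 := by
  rcases lt_or_gt_of_ne (mt (hB hb hb') hne) with h | h
  · exact (hAB.cross_neg a ha b hb b' hb' h).ne
  · rw [← neg_ne_zero, ← cross_swap_right]
    exact (hAB.cross_neg a ha b' hb' b hb h).ne

lemma not_hasCollinear_union (hAB : Glueable A B) {l : ℕ} (hl : 3 ≤ l) (hA : DistinctX A)
    (hB : DistinctX B) (hAl : ¬HasCollinear l A) (hBl : ¬HasCollinear l B) :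
    ¬HasCollinear l (A ∪ B) := by
  rintro ⟨S, hSAB, hcard, hS⟩
  by_cases hSA : S ⊆ A
  · exact hAl ⟨S, hSA, hcard, hS⟩
  by_cases hSB : S ⊆ B
  · exact hBl ⟨S, hSB, hcard, hS⟩
  obtain ⟨b, hbS, hbA⟩ := not_subset.1 hSA
  obtain ⟨a, haS, haB⟩ := not_subset.1 hSB
  have ha : a ∈ A := (mem_union.1 (hSAB haS)).resolve_right haB
  have hb : b ∈ B := (mem_union.1 (hSAB hbS)).resolve_left hbA
  have hSab : S ⊆ {a, b} := by
    intro c hcS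
    rcases mem_union.1 (hSAB hcS) with hc | hc
    · rcases eq_or_ne a c with rfl | hac
      · simp
      exact absurd (hS.cross_eq_zero haS hcS hbS) (hAB.cross_ne_zero_left hA ha hc hac hb)
    · rcases eq_or_ne b c with rfl | hbc
      · simp
      exact absurd (hS.cross_eq_zero haS hbS hcS) (hAB.cross_ne_zero_right hB ha hb hc hbc)
  have := (card_le_card hSab).trans card_le_two
  omega

lemma exists_split_index (hAB : Glueable A B) {N : ℕ} {p : Fin N → Pt}
    (hp : ∀ i, p i ∈ A ∪ B) (hmono : ∀ i j, i < j → (p i).1 < (p j).1) :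
    ∃ s ≤ N, (∀ i : Fin N, ↑i < s → p i ∈ A) ∧ ∀ i : Fin N, s ≤ ↑i → p i ∈ B := by
  classical
  have hB_of_le : ∀ i j : Fin N, i ≤ j → p i ∉ A → p j ∈ B := by
    intro i j hij hi
    have hiB := (mem_union.1 (hp i)).resolve_left hi
    refine (mem_union.1 (hp j)).resolve_left fun hj => ?_
    have := hAB.fst_lt _ hj _ hiB
    rcases hij.lt_or_eq with h | rfl
    · exact (hmono i j h).not_gt this
    · exact this.false
  by_cases h : ∃ s, ∃ hs : s < N, p ⟨s, hs⟩ ∉ A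
  · obtain ⟨hs, hsA⟩ := Nat.find_spec h
    refine ⟨Nat.find h, hs.le, fun i hi => ?_, fun i hi => hB_of_le _ i hi hsA⟩
    have := Nat.find_min h hi
    push Not at this
    exact this i.2
  · push Not at h
    exact ⟨N, le_rfl, fun i _ => h i i.2, fun i hi => absurd i.2 (by omega)⟩

lemma not_hasCup_union (hAB : Glueable A B) {k : ℕ} (hA : ¬HasCup (k + 1) A)
    (hB : ¬HasCup (k + 2) B) : ¬HasCup (k + 2) (A ∪ B) := by
  rintro ⟨p, hpAB, hp⟩
  obtain ⟨s, hsN, hlt, hge⟩ := hAB.exists_split_index hpAB hp.1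
  rcases s with _ | t
  · exact hB ⟨p, fun i => hge i (Nat.zero_le _), hp⟩
  by_cases hs : k ≤ t
  · exact hA ⟨_, fun j => hlt _ (by simp only [zero_add]; omega),
      hp.segment 0 (k + 1) (by omega)⟩
  have := hp.cross_pos t (by omega)
  exact (hAB.cross_neg _ (hlt _ (by simp)) _ (hge _ le_rfl) _ (hge _ (by simp))
    (hp.1 _ _ (by simp [Fin.lt_def]))).not_gt this

lemma not_hasCap_union (hAB : Glueable A B) {k : ℕ} (hA : ¬HasCap (k + 2) A)
    (hB : ¬HasCap (k + 1) B) : ¬HasCap (k + 2) (A ∪ B) := by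
  rintro ⟨p, hpAB, hp⟩
  obtain ⟨s, hsN, hlt, hge⟩ := hAB.exists_split_index hpAB hp.1
  by_cases hs1 : s ≤ 1
  · exact hB ⟨_, fun j => hge _ (by simp only; omega), hp.segment 1 (k + 1) (by omega)⟩
  obtain ⟨t, rfl⟩ : ∃ t, s = t + 2 := ⟨s - 2, by omega⟩
  by_cases hs : t + 2 = k + 2
  · exact hA ⟨p, fun i => hlt i (by omega), hp⟩
  have := hp.cross_neg t (by omega)
  exact (hAB.cross_pos _ (hlt _ (by simp)) _ (hlt _ (by simp)) (hp.1 _ _ (by simp [Fin.lt_def]))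
    _ (hge _ le_rfl)).not_gt this

end Glueable

lemma eventually_glueable_vadd (A B : Finset Pt) {c : ℝ}
    (hc : ∀ a ∈ A, ∀ b ∈ B, a.1 < c + b.1) :
    ∀ᶠ M : ℝ in atTop, Glueable A ((c, M) +ᵥ B) := by
  have h₁ : ∀ᶠ M : ℝ in atTop, ∀ a ∈ A, ∀ a' ∈ A, a.1 < a'.1 → ∀ b ∈ B,
      0 < cross a a' ((c, M) + b) := by
    simp only [eventually_all_finset, eventually_imp_distrib_left]
    intro a _ a' _ h b _
    filter_upwards [(tendsto_id.const_mul_atTop (sub_pos.2 h)).eventually_gt_atTop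
      (-cross a a' ((c, 0) + b))] with M hM
    have : cross a a' ((c, M) + b) = cross a a' ((c, 0) + b) + (a'.1 - a.1) * M := by
      simp only [cross, Prod.fst_add, Prod.snd_add]; ring
    simp only [id] at hM
    linarith
  have h₂ : ∀ᶠ M : ℝ in atTop, ∀ a ∈ A, ∀ b ∈ B, ∀ b' ∈ B, b.1 < b'.1 →
      cross a ((c, M) + b) ((c, M) + b') < 0 := by
    simp only [eventually_all_finset, eventually_imp_distrib_left]
    intro a _ b _ b' _ h
    filter_upwards [(tendsto_id.const_mul_atTop (sub_pos.2 h)).eventually_gt_atTop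
      (cross a ((c, 0) + b) ((c, 0) + b'))] with M hM
    have : cross a ((c, M) + b) ((c, M) + b') =
        cross a ((c, 0) + b) ((c, 0) + b') - (b'.1 - b.1) * M := by
      simp only [cross, Prod.fst_add, Prod.snd_add]; ring
    simp only [id] at hM
    linarith
  filter_upwards [h₁, h₂] with M h₁ h₂
  refine ⟨?_, ?_, ?_⟩
  · rintro a ha _ hx
    obtain ⟨b, hb, rfl⟩ := mem_vadd_finset.1 hx
    exact hc a ha b hb
  · rintro a ha a' ha' h _ hx
    obtain ⟨b, hb, rfl⟩ := mem_vadd_finset.1 hx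
    exact h₁ a ha a' ha' h b hb
  · rintro a ha _ hx _ hx' h
    obtain ⟨b, hb, rfl⟩ := mem_vadd_finset.1 hx
    obtain ⟨b', hb', rfl⟩ := mem_vadd_finset.1 hx'
    exact h₂ a ha b hb b' hb' (by simpa using h)

lemma exists_glueable_vadd (A B : Finset Pt) : ∃ v : Pt, Glueable A (v +ᵥ B) := by
  obtain ⟨x, hx⟩ := (A.image Prod.fst).bddAbove
  obtain ⟨y, hy⟩ := (B.image Prod.fst).bddBelow
  have hc : ∀ a ∈ A, ∀ b ∈ B, a.1 < (x - y + 1) + b.1 := fun a ha b hb => by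
    linarith [hx (mem_coe.2 (mem_image_of_mem _ ha)), hy (mem_coe.2 (mem_image_of_mem _ hb))]
  obtain ⟨M, hM⟩ := (eventually_glueable_vadd A B hc).exists
  exact ⟨_, hM⟩

/-- **Recursive gluing step for the lower bound of `f_ℓ(m,n)`.** If there is an `a`-point
configuration with no `ℓ` collinear points, no `(m−1)`-cup and no `n`-cap, and a `b`-point
configuration with no `ℓ` collinear points, no `m`-cup and no `(n−1)`-cap, then there is an
`(a+b)`-point configuration with no `ℓ` collinear points, no `m`-cup and no `n`-cap. -/
theorem stmt9 :
    ∀ l m n : ℕ, 3 ≤ l → 4 ≤ m → 4 ≤ n →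
    ∀ A B : Finset Pt,
      DistinctX A → ¬ HasCollinear l A → ¬ HasCup (m - 1) A → ¬ HasCap n A →
      DistinctX B → ¬ HasCollinear l B → ¬ HasCup m B → ¬ HasCap (n - 1) B →
      ∃ X : Finset Pt,
        DistinctX X ∧ X.card = A.card + B.card ∧
        ¬ HasCollinear l X ∧ ¬ HasCup m X ∧ ¬ HasCap n X := by
  intro l m n hl hm hn A B hAx hAl hAcup hAcap hBx hBl hBcup hBcap
  obtain ⟨m, rfl⟩ : ∃ k, m = k + 2 := ⟨m - 2, by omega⟩
  obtain ⟨n, rfl⟩ : ∃ k, n = k + 2 := ⟨n - 2, by omega⟩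
  obtain ⟨v, hAB⟩ := exists_glueable_vadd A B
  refine ⟨A ∪ (v +ᵥ B), hAB.distinctX_union hAx (hBx.vadd v), ?_,
    hAB.not_hasCollinear_union hl hAx (hBx.vadd v) hAl ((hasCollinear_vadd_iff v).not.2 hBl),
    hAB.not_hasCup_union hAcup ((hasCup_vadd_iff v).not.2 hBcup),
    hAB.not_hasCap_union hAcap ((hasCap_vadd_iff v).not.2 hBcap)⟩
  rw [card_union_of_disjoint hAB.disjoint, card_vadd_finset]

end
end

section
/- For all integers ℓ ≥ 3 and m ≥ 3, there exists a finite set P ⊆ ℝ² with pairwise distinct x-coordinates, containing no ℓ collinear points, no m-cup, and no 3-cap, such that 2·|P| ≥ (ℓ − 1)·(m − 1) − (ℓ − 3). (Explicitly, one may take |P| = (ℓ−1)(m−1)/2 when m−1 is even and |P| = (ℓ−1)(m−2)/2 + 1 when m−1 is odd.) -/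
/-!
The points are placed on the convex polygonal line through the points `(k, k(k-1)/2)`, whose
`k`-th edge has slope `k`: `l - 1` points inside each of the first `⌊(m-1)/2⌋` edges, and one
more point on the next edge when `m - 1` is odd. Points on a convex curve never form a 3-cap, and
three of them are collinear only if they lie on a common edge. Hence at most `l - 1` of the points
are collinear, and a cup, which cannot contain three points of one edge, takes at most two points
from each edge, so it has at most `m - 1` points.
-/

open Finset

noncomputable section

/-- For `a.1 < b.1 < c.1`, negative exactly when `b` lies strictly below the line `ac`. -/
def turn (a b c : Pt) : ℝ := (b.2 - a.2) * (c.1 - a.1) - (c.2 - a.2) * (b.1 - a.1)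

lemma turn_eq (a b c : Pt) :
    turn a b c = (b.2 - a.2) * (c.1 - b.1) - (c.2 - b.2) * (b.1 - a.1) := by
  unfold turn; ring

lemma turn_eq_zero_of_collinear {s : Set Pt} (hs : Collinear ℝ s) {a b c : Pt}
    (ha : a ∈ s) (hb : b ∈ s) (hc : c ∈ s) : turn a b c = 0 := by
  obtain ⟨v, hv⟩ := (collinear_iff_of_mem ha).1 hs
  obtain ⟨r, rfl⟩ := hv b hb
  obtain ⟨r', rfl⟩ := hv c hc
  simp only [turn, vadd_eq_add, Prod.fst_add, Prod.snd_add, Prod.smul_fst, Prod.smul_snd,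
    smul_eq_mul]
  ring

lemma IsCupSeq.turn_neg {k : ℕ} {p : Fin k → Pt} (hp : IsCupSeq p) (i : ℕ) (h : i + 2 < k) :
    turn (p ⟨i, by omega⟩) (p ⟨i + 1, by omega⟩) (p ⟨i + 2, h⟩) < 0 :=
  sub_neg.2 (hp.2 i h)

lemma IsCapSeq.turn_pos {k : ℕ} {p : Fin k → Pt} (hp : IsCapSeq p) (i : ℕ) (h : i + 2 < k) :
    0 < turn (p ⟨i, by omega⟩) (p ⟨i + 1, by omega⟩) (p ⟨i + 2, h⟩) :=
  sub_pos.2 (hp.2 i h)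

lemma IsCupSeq.injective {k : ℕ} {p : Fin k → Pt} (hp : IsCupSeq p) : Function.Injective p :=
  (show StrictMono (Prod.fst ∘ p) from hp.1).injective.of_comp

/-- For `u ∈ [0, 1]`, the point over `x = i + u` on the edge of slope `i` from `(i, i(i-1)/2)`
to `(i+1, (i+1)i/2)`. -/
def chainPt (i : ℕ) (u : ℝ) : Pt := (i + u, (i : ℝ) * (i - 1) / 2 + i * u)

def chain : Set Pt := {p | ∃ i : ℕ, ∃ u ∈ Set.Ioo (0 : ℝ) 1, chainPt i u = p}

lemma floor_chainPt_fst {i : ℕ} {u : ℝ} (hu : u ∈ Set.Ioo (0 : ℝ) 1) :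
    ⌊(chainPt i u).1⌋₊ = i := by
  rw [Nat.floor_eq_iff (by simp only [chainPt]; linarith [hu.1, (i.cast_nonneg : (0 : ℝ) ≤ i)])]
  simp only [chainPt]
  constructor <;> linarith [hu.1, hu.2]

lemma le_of_chainPt_fst_le {i i' : ℕ} {u u' : ℝ} (hu : u ∈ Set.Ioo (0 : ℝ) 1)
    (hu' : u' ∈ Set.Ioo (0 : ℝ) 1) (h : (chainPt i u).1 ≤ (chainPt i' u').1) : i ≤ i' :=
  (floor_chainPt_fst hu).symm.trans_le ((Nat.floor_le_floor h).trans_eq (floor_chainPt_fst hu'))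

lemma chainPt_slope_same (i : ℕ) (u u' : ℝ) :
    (chainPt i u').2 - (chainPt i u).2 = i * ((chainPt i u').1 - (chainPt i u).1) := by
  simp only [chainPt]; ring

lemma chainPt_slope_gt {i i' : ℕ} {u u' : ℝ} (hi : i < i') (hu' : 0 < u') :
    i * ((chainPt i' u').1 - (chainPt i u).1) < (chainPt i' u').2 - (chainPt i u).2 := by
  have hd : (1 : ℝ) ≤ i' - i := by
    rw [le_sub_iff_add_le']; exact_mod_cast hi
  have key : (chainPt i' u').2 - (chainPt i u).2 - i * ((chainPt i' u').1 - (chainPt i u).1)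
      = (i' - i) * ((i' - i - 1) / 2 + u') := by
    simp only [chainPt]; ring
  have : 0 < ((i' : ℝ) - i) * ((i' - i - 1) / 2 + u') := by apply mul_pos <;> linarith
  linarith

lemma chainPt_slope_lt {i i' : ℕ} {u u' : ℝ} (hi : i < i') (hu : u < 1) :
    (chainPt i' u').2 - (chainPt i u).2 < i' * ((chainPt i' u').1 - (chainPt i u).1) := by
  have hd : (1 : ℝ) ≤ i' - i := by
    rw [le_sub_iff_add_le']; exact_mod_cast hi
  have key : i' * ((chainPt i' u').1 - (chainPt i u).1) - ((chainPt i' u').2 - (chainPt i u).2)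
      = (i' - i) * ((i' - i + 1) / 2 - u) := by
    simp only [chainPt]; ring
  have : 0 < ((i' : ℝ) - i) * ((i' - i + 1) / 2 - u) := by apply mul_pos <;> linarith
  linarith

lemma turn_neg_of_mem_chain {a b c : Pt} (ha : a ∈ chain) (hb : b ∈ chain) (hc : c ∈ chain)
    (hab : a.1 < b.1) (hbc : b.1 < c.1) (hac : ⌊a.1⌋₊ ≠ ⌊c.1⌋₊) : turn a b c < 0 := by
  obtain ⟨i₁, u₁, hu₁, rfl⟩ := ha
  obtain ⟨i₂, u₂, hu₂, rfl⟩ := hb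
  obtain ⟨i₃, u₃, hu₃, rfl⟩ := hc
  have hi₁₂ := le_of_chainPt_fst_le hu₁ hu₂ hab.le
  have hi₂₃ := le_of_chainPt_fst_le hu₂ hu₃ hbc.le
  rw [floor_chainPt_fst hu₁, floor_chainPt_fst hu₃] at hac
  have hab' := sub_pos.2 hab
  have hbc' := sub_pos.2 hbc
  -- the slope of `ab` is at most `i₂`, that of `bc` at least `i₂`, and one of them strictly
  rw [turn_eq]
  rcases hi₁₂.lt_or_eq with h₁₂ | rfl
  · have hslope₂₃ : (i₂ : ℝ) * ((chainPt i₃ u₃).1 - (chainPt i₂ u₂).1)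
        ≤ (chainPt i₃ u₃).2 - (chainPt i₂ u₂).2 := by
      rcases hi₂₃.lt_or_eq with h₂₃ | rfl
      · exact (chainPt_slope_gt h₂₃ hu₃.1).le
      · exact (chainPt_slope_same i₂ u₂ u₃).ge
    linarith [mul_lt_mul_of_pos_right (chainPt_slope_lt h₁₂ hu₁.2 (u' := u₂)) hbc',
      mul_le_mul_of_nonneg_left hslope₂₃ hab'.le]
  · rw [chainPt_slope_same i₁ u₁ u₂]
    linarith [mul_lt_mul_of_pos_right (chainPt_slope_gt (hi₂₃.lt_of_ne hac) hu₃.1 (u := u₂)) hab']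

lemma turn_eq_zero_of_mem_chain {a b c : Pt} (ha : a ∈ chain) (hb : b ∈ chain) (hc : c ∈ chain)
    (hab : a.1 < b.1) (hbc : b.1 < c.1) (hac : ⌊a.1⌋₊ = ⌊c.1⌋₊) : turn a b c = 0 := by
  obtain ⟨i₁, u₁, hu₁, rfl⟩ := ha
  obtain ⟨i₂, u₂, hu₂, rfl⟩ := hb
  obtain ⟨i₃, u₃, hu₃, rfl⟩ := hc
  have hi₁₂ := le_of_chainPt_fst_le hu₁ hu₂ hab.le
  have hi₂₃ := le_of_chainPt_fst_le hu₂ hu₃ hbc.le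
  rw [floor_chainPt_fst hu₁, floor_chainPt_fst hu₃] at hac
  obtain rfl : i₁ = i₂ := by omega
  obtain rfl : i₁ = i₃ := hac
  simp only [turn, chainPt]
  ring

lemma turn_nonpos_of_mem_chain {a b c : Pt} (ha : a ∈ chain) (hb : b ∈ chain) (hc : c ∈ chain)
    (hab : a.1 < b.1) (hbc : b.1 < c.1) : turn a b c ≤ 0 := by
  by_cases hac : ⌊a.1⌋₊ = ⌊c.1⌋₊
  · exact (turn_eq_zero_of_mem_chain ha hb hc hab hbc hac).le
  · exact (turn_neg_of_mem_chain ha hb hc hab hbc hac).le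

lemma chain_injOn_fst : Set.InjOn Prod.fst chain := by
  rintro _ ⟨i, u, hu, rfl⟩ _ ⟨i', u', hu', rfl⟩ h
  obtain rfl : i = i' := by
    rw [← floor_chainPt_fst (i := i) hu, ← floor_chainPt_fst (i := i') hu', h]
  obtain rfl : u = u' := by simpa [chainPt] using h
  rfl

lemma not_hasCap_three_of_subset_chain {P : Finset Pt} (hP : ↑P ⊆ chain) : ¬ HasCap 3 P := by
  rintro ⟨p, hpP, hp⟩
  exact (hp.turn_pos 0 (by norm_num)).not_ge <| turn_nonpos_of_mem_chain
    (hP (hpP _)) (hP (hpP _)) (hP (hpP _)) (hp.1 _ _ (by decide)) (hp.1 _ _ (by decide))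

lemma exists_floor_eq_of_collinear {S : Finset Pt} (hS : ↑S ⊆ chain) (h3 : 3 ≤ #S)
    (hcol : Collinear ℝ (S : Set Pt)) : ∃ i : ℕ, ∀ p ∈ S, ⌊p.1⌋₊ = i := by
  have hne : S.Nonempty := card_pos.1 (by omega)
  obtain ⟨a, ha, hmin⟩ := S.exists_min_image Prod.fst hne
  obtain ⟨c, hc, hmax⟩ := S.exists_max_image Prod.fst hne
  obtain ⟨b, hb⟩ : ((S.erase a).erase c).Nonempty := by
    have := pred_card_le_card_erase (s := S) (a := a)
    have := pred_card_le_card_erase (s := S.erase a) (a := c)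
    exact card_pos.1 (by omega)
  obtain ⟨hbc, hba, hb⟩ : b ≠ c ∧ b ≠ a ∧ b ∈ S := by simpa using hb
  have hinj := chain_injOn_fst.mono hS
  have hab : a.1 < b.1 := (hmin b hb).lt_of_ne fun h => hba (hinj hb ha h.symm)
  have hbc : b.1 < c.1 := (hmax b hb).lt_of_ne fun h => hbc (hinj hb hc h)
  have hac : ⌊a.1⌋₊ = ⌊c.1⌋₊ := by
    by_contra hac
    exact (turn_neg_of_mem_chain (hS ha) (hS hb) (hS hc) hab hbc hac).ne
      (turn_eq_zero_of_collinear hcol ha hb hc)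
  exact ⟨⌊a.1⌋₊, fun p hp =>
    le_antisymm (hac ▸ Nat.floor_le_floor (hmax p hp)) (Nat.floor_le_floor (hmin p hp))⟩

lemma Monotone.exists_consecutive_of_two_lt_card_fiber {k : ℕ} {σ : Fin k → ℕ} (hσ : Monotone σ)
    {i : ℕ} (h : 2 < #{r | σ r = i}) :
    ∃ r : ℕ, ∃ hr : r + 2 < k,
      σ ⟨r, by omega⟩ = i ∧ σ ⟨r + 1, by omega⟩ = i ∧ σ ⟨r + 2, hr⟩ = i := by
  set F : Finset (Fin k) := {r | σ r = i}
  have hF : F.Nonempty := card_pos.1 (by omega)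
  obtain ⟨r₁, hr₁, hmin⟩ : ∃ r₁ ∈ F, ∀ r ∈ F, r₁ ≤ r := ⟨F.min' hF, F.min'_mem hF, F.min'_le⟩
  obtain ⟨r₃, hr₃, hmax⟩ : ∃ r₃ ∈ F, ∀ r ∈ F, r ≤ r₃ := ⟨F.max' hF, F.max'_mem hF, F.le_max'⟩
  have hgap : (r₁ : ℕ) + 2 ≤ r₃ := by
    have := card_le_card fun r hr => mem_Icc.2 ⟨hmin r hr, hmax r hr⟩
    rw [Fin.card_Icc] at this
    omega
  have hσ' (r : ℕ) (hr : r < k) (h₁ : r₁ ≤ r) (h₂ : r ≤ r₃) : σ ⟨r, hr⟩ = i :=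
    le_antisymm ((mem_filter.1 hr₃).2 ▸ hσ (Fin.le_def.2 h₂))
      ((mem_filter.1 hr₁).2 ▸ hσ (Fin.le_def.2 h₁))
  exact ⟨r₁, by omega, hσ' _ _ le_rfl (by omega), hσ' _ _ (by omega) (by omega),
    hσ' _ _ (by omega) hgap⟩

lemma IsCupSeq.card_fiber_floor_le_two {k : ℕ} {p : Fin k → Pt} (hp : IsCupSeq p)
    (hchain : ∀ r, p r ∈ chain) (i : ℕ) : #{r | ⌊(p r).1⌋₊ = i} ≤ 2 := by
  by_contra! h
  have hmono : Monotone fun r => ⌊(p r).1⌋₊ :=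
    Nat.floor_mono.comp (show StrictMono fun r => (p r).1 from hp.1).monotone
  obtain ⟨r, hr, h₀, -, h₂⟩ := hmono.exists_consecutive_of_two_lt_card_fiber h
  exact (hp.turn_neg r hr).ne (turn_eq_zero_of_mem_chain (hchain _) (hchain _) (hchain _)
    (hp.1 _ _ (Fin.mk_lt_mk.2 (by omega))) (hp.1 _ _ (Fin.mk_lt_mk.2 (by omega))) (h₀.trans h₂.symm))

lemma natCast_add_one_div_mem_Ioo {j n : ℕ} (hj : j < n) :
    ((j : ℝ) + 1) / (n + 1) ∈ Set.Ioo (0 : ℝ) 1 :=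
  ⟨by positivity, (div_lt_one (by positivity)).2 (by exact_mod_cast Nat.succ_lt_succ hj)⟩

def chainPiece (n : ℕ → ℕ) (i : ℕ) : Finset Pt :=
  (range (n i)).image fun j : ℕ => chainPt i ((j + 1) / (n i + 1))

def chainSet (N : ℕ) (n : ℕ → ℕ) : Finset Pt := (range N).biUnion (chainPiece n)

lemma chainPiece_subset_chain (n : ℕ → ℕ) (i : ℕ) : ↑(chainPiece n i) ⊆ chain := by
  intro p hp
  obtain ⟨j, hj, rfl⟩ := mem_image.1 hp
  exact ⟨i, _, natCast_add_one_div_mem_Ioo (mem_range.1 hj), rfl⟩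

lemma floor_fst_of_mem_chainPiece {n : ℕ → ℕ} {i : ℕ} {p : Pt} (hp : p ∈ chainPiece n i) :
    ⌊p.1⌋₊ = i := by
  obtain ⟨j, hj, rfl⟩ := mem_image.1 hp
  exact floor_chainPt_fst (natCast_add_one_div_mem_Ioo (mem_range.1 hj))

lemma card_chainPiece (n : ℕ → ℕ) (i : ℕ) : #(chainPiece n i) = n i := by
  refine (card_image_of_injective _ fun j j' h => ?_).trans (card_range _)
  have := add_left_cancel (congrArg Prod.fst h)
  rw [div_left_inj' (by positivity)] at this
  exact_mod_cast add_right_cancel this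

lemma chainSet_subset_chain (N : ℕ) (n : ℕ → ℕ) : ↑(chainSet N n) ⊆ chain := by
  intro p hp
  obtain ⟨i, -, hp⟩ := mem_biUnion.1 hp
  exact chainPiece_subset_chain n i hp

lemma card_chainSet (N : ℕ) (n : ℕ → ℕ) : #(chainSet N n) = ∑ i ∈ range N, n i := by
  rw [chainSet, card_biUnion]
  · simp only [card_chainPiece]
  · intro i _ i' _ hii'
    refine disjoint_left.2 fun p hp hp' => hii' ?_
    rw [← floor_fst_of_mem_chainPiece hp, floor_fst_of_mem_chainPiece hp']

lemma mem_chainPiece_floor_of_mem_chainSet {N : ℕ} {n : ℕ → ℕ} {p : Pt} (hp : p ∈ chainSet N n) :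
    ⌊p.1⌋₊ < N ∧ p ∈ chainPiece n ⌊p.1⌋₊ := by
  obtain ⟨i, hi, hpi⟩ := mem_biUnion.1 hp
  rw [floor_fst_of_mem_chainPiece hpi]
  exact ⟨mem_range.1 hi, hpi⟩

lemma not_hasCollinear_chainSet {l N : ℕ} {n : ℕ → ℕ} (hl : 3 ≤ l) (hn : ∀ i, n i < l) :
    ¬ HasCollinear l (chainSet N n) := by
  rintro ⟨S, hSP, rfl, hcol⟩
  obtain ⟨i, hi⟩ := exists_floor_eq_of_collinear
    ((coe_subset.2 hSP).trans (chainSet_subset_chain N n)) hl hcol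
  have hSi : S ⊆ chainPiece n i := fun p hp =>
    hi p hp ▸ (mem_chainPiece_floor_of_mem_chainSet (hSP hp)).2
  exact (card_le_card hSi).not_gt (card_chainPiece n i ▸ hn i)

lemma not_hasCup_chainSet {k N : ℕ} {n : ℕ → ℕ} (h : ∑ i ∈ range N, min 2 (n i) < k) :
    ¬ HasCup k (chainSet N n) := by
  rintro ⟨p, hpP, hp⟩
  have hfiber (i : ℕ) : #{r | ⌊(p r).1⌋₊ = i} ≤ n i := by
    rw [← card_chainPiece n i]
    refine card_le_card_of_injOn p (fun r hr => ?_) hp.injective.injOn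
    exact (mem_filter.1 hr).2 ▸ (mem_chainPiece_floor_of_mem_chainSet (hpP r)).2
  have hk : k ≤ ∑ i ∈ range N, min 2 (n i) := calc
    k = ∑ i ∈ range N, #{r | ⌊(p r).1⌋₊ = i} := by
      simpa using card_eq_sum_card_fiberwise (s := univ)
        fun r _ => mem_range.2 (mem_chainPiece_floor_of_mem_chainSet (hpP r)).1
    _ ≤ ∑ i ∈ range N, min 2 (n i) := sum_le_sum fun i _ =>
      le_min (hp.card_fiber_floor_le_two (fun r => chainSet_subset_chain N n (hpP r)) i)
        (hfiber i)
  exact hk.not_gt h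

lemma sum_range_succ_ite_lt {M : Type*} [AddCommMonoid M] (t : ℕ) (a b : M) :
    ∑ i ∈ range (t + 1), (if i < t then a else b) = t • a + b := by
  rw [sum_range_succ, if_neg (lt_irrefl t), sum_congr rfl fun i hi => if_pos (mem_range.1 hi),
    sum_const, card_range]

/-- **Base case of the lower bound for `f_ℓ(m,3)`.** For all `ℓ, m ≥ 3` there is a finite
planar point set with pairwise distinct x-coordinates, no `ℓ` collinear points, no `m`-cup
and no 3-cap, such that `2·|P| ≥ (ℓ−1)(m−1) − (ℓ−3)`. -/
theorem stmt10 :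
    ∀ l m : ℕ, 3 ≤ l → 3 ≤ m → ∃ P : Finset Pt,
      DistinctX P ∧
      ¬ HasCollinear l P ∧ ¬ HasCup m P ∧ ¬ HasCap 3 P ∧
      (l - 1) * (m - 1) - (l - 3) ≤ 2 * P.card := by
  intro l m hl hm
  obtain ⟨t, e, he, hsplit⟩ : ∃ t e, e ≤ 1 ∧ m - 1 = 2 * t + e :=
    ⟨(m - 1) / 2, (m - 1) % 2, by omega, by omega⟩
  set n : ℕ → ℕ := fun i => if i < t then l - 1 else e
  have hP := chainSet_subset_chain (t + 1) n
  refine ⟨chainSet (t + 1) n, chain_injOn_fst.mono hP, not_hasCollinear_chainSet hl fun i => ?_,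
    not_hasCup_chainSet ?_, not_hasCap_three_of_subset_chain hP, ?_⟩
  · simp only [n]; split_ifs <;> omega
  · simp only [n, apply_ite (min 2), min_eq_left (show 2 ≤ l - 1 by omega),
      min_eq_right (show e ≤ 2 by omega), sum_range_succ_ite_lt, smul_eq_mul]
    omega
  · rw [card_chainSet, sum_range_succ_ite_lt, smul_eq_mul, hsplit]
    interval_cases e <;> ring_nf <;> omega
end
end
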